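/- arXiv:2410.17503 — 4 statements merged into one kernel-verified Lean document; each statement's English description precedes it below -/
import Mathlib

section
/- Fix nonempty finite sets Ω and A, a finite message set M with |M| > max{|Ω|, |A|}, and an interior prior μ₀ on Ω. Then there is a generic set of environments such that for every environment (u_S, u_R) in that set: if cheap-talk Sender values randomization, then committed Sender values randomization. -/
open MeasureTheory

namespace KL

/-- `f` is a probability distribution on the finite type `X`. -/
def IsDist {X : Type} [Fintype X] (f : X → ℝ) : Prop :=
  (∀ x, 0 ≤ f x) ∧ ∑ x, f x = 1

/-- `μ₀` is an interior prior on `Ω`. -/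
def IsPrior {Ω : Type} [Fintype Ω] (μ₀ : Ω → ℝ) : Prop :=
  (∀ ω, 0 < μ₀ ω) ∧ ∑ ω, μ₀ ω = 1

variable {Ω A M : Type} [Fintype Ω] [Fintype A] [Fintype M]

/-- A messaging strategy: a distribution over messages in each state. -/
def IsMsg (σ : Ω → M → ℝ) : Prop := ∀ ω, IsDist (σ ω)

/-- An action strategy: a distribution over actions after each message. -/
def IsAct (ρ : M → A → ℝ) : Prop := ∀ m, IsDist (ρ m)

/-- Expected payoff of a profile `(σ, ρ)` for utility `u`. -/
def U (μ₀ : Ω → ℝ) (u : A × Ω → ℝ) (σ : Ω → M → ℝ) (ρ : M → A → ℝ) : ℝ :=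
  ∑ ω, ∑ m, ∑ a, μ₀ ω * σ ω m * ρ m a * u (a, ω)

/-- Sender best response. -/
def SBR (μ₀ : Ω → ℝ) (uS : A × Ω → ℝ) (σ : Ω → M → ℝ) (ρ : M → A → ℝ) : Prop :=
  ∀ σ' : Ω → M → ℝ, IsMsg σ' → U μ₀ uS σ' ρ ≤ U μ₀ uS σ ρ

/-- Receiver best response. -/
def RBR (μ₀ : Ω → ℝ) (uR : A × Ω → ℝ) (σ : Ω → M → ℝ) (ρ : M → A → ℝ) : Prop :=
  ∀ ρ' : M → A → ℝ, IsAct ρ' → U μ₀ uR σ ρ' ≤ U μ₀ uR σ ρ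

/-- A cheap-talk equilibrium: a profile of valid strategies that is S-BR and R-BR. -/
def CTEq (μ₀ : Ω → ℝ) (uS uR : A × Ω → ℝ) (σ : Ω → M → ℝ) (ρ : M → A → ℝ) : Prop :=
  IsMsg σ ∧ IsAct ρ ∧ SBR μ₀ uS σ ρ ∧ RBR μ₀ uR σ ρ

/-- A persuasion profile: a profile of valid strategies that is R-BR. -/
def PersProfile (μ₀ : Ω → ℝ) (uR : A × Ω → ℝ) (σ : Ω → M → ℝ) (ρ : M → A → ℝ) : Prop :=
  IsMsg σ ∧ IsAct ρ ∧ RBR μ₀ uR σ ρ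

/-- The cheap-talk payoff: the maximal Sender payoff over cheap-talk equilibria. -/
noncomputable def ctPayoff (μ₀ : Ω → ℝ) (uS uR : A × Ω → ℝ) : ℝ :=
  sSup {x | ∃ (σ : Ω → M → ℝ) (ρ : M → A → ℝ), CTEq μ₀ uS uR σ ρ ∧ x = U μ₀ uS σ ρ}

/-- The (Bayesian) persuasion payoff: the maximal Sender payoff over persuasion profiles. -/
noncomputable def persPayoff (μ₀ : Ω → ℝ) (uS uR : A × Ω → ℝ) : ℝ :=
  sSup {x | ∃ (σ : Ω → M → ℝ) (ρ : M → A → ℝ), PersProfile μ₀ uR σ ρ ∧ x = U μ₀ uS σ ρ}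

/-- A messaging strategy is partitional if it is deterministic in every state. -/
def Partitional (σ : Ω → M → ℝ) : Prop := ∀ ω, ∃ m, σ ω m = 1

/-- The partitional persuasion payoff. -/
noncomputable def partPersPayoff (μ₀ : Ω → ℝ) (uS uR : A × Ω → ℝ) : ℝ :=
  sSup {x | ∃ (σ : Ω → M → ℝ) (ρ : M → A → ℝ),
    Partitional σ ∧ PersProfile μ₀ uR σ ρ ∧ x = U μ₀ uS σ ρ}

/-- The partitional cheap-talk payoff. -/
noncomputable def partCtPayoff (μ₀ : Ω → ℝ) (uS uR : A × Ω → ℝ) : ℝ :=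
  sSup {x | ∃ (σ : Ω → M → ℝ) (ρ : M → A → ℝ),
    Partitional σ ∧ CTEq μ₀ uS uR σ ρ ∧ x = U μ₀ uS σ ρ}

/-- A message is on-path if it is sent with positive probability in some state. -/
def OnPath (σ : Ω → M → ℝ) (m : M) : Prop := ∃ ω, 0 < σ ω m

/-- A pure action strategy: degenerate after every message. -/
def IsPureAct (ρ : M → A → ℝ) : Prop := ∀ m, ∃ a, ρ m a = 1

/-- A pure-on-path action strategy: degenerate after every on-path message. -/
def PureOnPath (σ : Ω → M → ℝ) (ρ : M → A → ℝ) : Prop :=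
  ∀ m, OnPath σ m → ∃ a, ρ m a = 1

/-- The posterior belief induced by message `m`. -/
noncomputable def post (μ₀ : Ω → ℝ) (σ : Ω → M → ℝ) (m : M) (ω : Ω) : ℝ :=
  μ₀ ω * σ ω m / ∑ ω', μ₀ ω' * σ ω' m

/-- The cube of environments `[0,1]^(2|A||Ω|)`. -/
def EnvCube (Ω A : Type) : Set ((A × Ω → ℝ) × (A × Ω → ℝ)) :=
  {e | (∀ p, e.1 p ∈ Set.Icc (0 : ℝ) 1) ∧ ∀ p, e.2 p ∈ Set.Icc (0 : ℝ) 1}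

/-- The cube of transparent environments `[0,1]^(|A|(|Ω|+1))`, points `(v, u_R)`. -/
def TransCube (Ω A : Type) : Set ((A → ℝ) × (A × Ω → ℝ)) :=
  {e | (∀ a, e.1 a ∈ Set.Icc (0 : ℝ) 1) ∧ ∀ p, e.2 p ∈ Set.Icc (0 : ℝ) 1}

open Classical in
/-- The expanded-indifference matrix `T^i`: rows `u_S(a_j,·) − u_S(a_i,·)` for `j ≠ i`,
rows `u_R(a_j,·) − u_R(a_i,·)` for `j ≠ i`, and the rows of the identity matrix. -/
noncomputable def TMat (uS uR : A × Ω → ℝ) (i : A) :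
    Matrix (({j : A // j ≠ i} ⊕ {j : A // j ≠ i}) ⊕ Ω) Ω ℝ :=
  Matrix.of fun r ω =>
    match r with
    | Sum.inl (Sum.inl j) => uS (j.1, ω) - uS (i, ω)
    | Sum.inl (Sum.inr j) => uR (j.1, ω) - uR (i, ω)
    | Sum.inr ω' => if ω' = ω then 1 else 0

/-- Scant indifferences: every row-submatrix of every expanded-indifference matrix has
full rank (rank equal to the minimum of the number of rows and the number of columns). -/
def ScantIndiff (uS uR : A × Ω → ℝ) : Prop :=
  ∀ i : A, ∀ s : Finset (({j : A // j ≠ i} ⊕ {j : A // j ≠ i}) ⊕ Ω),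
    ((TMat uS uR i).submatrix (fun r : {x // x ∈ s} => r.1) id).rank
      = min s.card (Fintype.card Ω)

open Classical in
/-- The set `Ω_a` of states in which `a` is an ideal action for Sender. -/
noncomputable def idealStates (uS : A × Ω → ℝ) (a : A) : Finset Ω :=
  Finset.univ.filter fun ω => ∀ b, uS (b, ω) ≤ uS (a, ω)

/-- Felicitous environment. -/
def Felicitous (μ₀ : Ω → ℝ) (uS uR : A × Ω → ℝ) : Prop :=
  ∀ a a' : A, 0 ≤ ∑ ω ∈ idealStates uS a, μ₀ ω * (uR (a, ω) - uR (a', ω))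

/-- Partitional-unique-response: for every nonempty subset of states, Receiver's
expected payoff has a unique maximizer. -/
def PUR (μ₀ : Ω → ℝ) (uR : A × Ω → ℝ) : Prop :=
  ∀ S : Finset Ω, S.Nonempty →
    ∃! a : A, ∀ b : A, ∑ ω ∈ S, μ₀ ω * uR (b, ω) ≤ ∑ ω ∈ S, μ₀ ω * uR (a, ω)

/-- Jointly-inclusive environment: each action is the unique ideal action of both
players in some state. -/
def JointlyInclusive (uS uR : A × Ω → ℝ) : Prop :=
  ∀ a : A, ∃ ω : Ω,
    (∀ b, b ≠ a → uS (b, ω) < uS (a, ω)) ∧ ∀ b, b ≠ a → uR (b, ω) < uR (a, ω)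

end KL

/-!
Generically, Receiver has a unique best reply to every set of states: a tie between two actions
on a set of states is a nontrivial linear equation in `u_R`. Take the partitional profile that
is best for Sender, Receiver answering each cell with her unique best action. If committed
Sender does not value randomization, in no state does Sender gain by sending another on-path
message: otherwise, sending that message with small probability keeps all of Receiver's
(strict) replies optimal and strictly raises Sender's payoff. So that profile is a cheap-talk
equilibrium, and the cheap-talk payoff is at most the persuasion payoff, which equals the
partitional persuasion payoff, which is at most the partitional cheap-talk payoff.
-/

namespace KL

open Filter Topology

variable {Ω A M : Type}

theorem IsDist.sum_mul_le {X : Type} [Fintype X] {p g : X → ℝ} {c : ℝ} (hp : IsDist p)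
    (hg : ∀ x, g x ≤ c) : ∑ x, p x * g x ≤ c :=
  calc ∑ x, p x * g x ≤ ∑ x, p x * c :=
        Finset.sum_le_sum fun x _ => mul_le_mul_of_nonneg_left (hg x) (hp.1 x)
    _ = c := by rw [← Finset.sum_mul, hp.2, one_mul]

theorem isDist_single {X : Type} [Fintype X] [DecidableEq X] (x : X) :
    IsDist (Pi.single x (1 : ℝ)) :=
  ⟨fun y => by by_cases h : y = x <;> simp [h], by simp⟩

theorem IsDist.eq_single_of_eq_zero {X : Type} [Fintype X] [DecidableEq X] {p : X → ℝ}
    {x₀ : X} (hp : IsDist p) (h : ∀ x ≠ x₀, p x = 0) : p = Pi.single x₀ 1 := by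
  have hx₀ : p x₀ = 1 := by rw [← hp.2, Finset.sum_eq_single x₀ (fun x _ hx => h x hx) (by simp)]
  funext x
  by_cases hx : x = x₀
  · subst hx; simp [hx₀]
  · simp [h x hx, hx]

theorem IsDist.eq_single_of_eq_one {X : Type} [Fintype X] [DecidableEq X] {p : X → ℝ}
    {x₀ : X} (hp : IsDist p) (h : p x₀ = 1) : p = Pi.single x₀ 1 := by
  refine hp.eq_single_of_eq_zero fun x hx => ?_
  have hrest : ∑ y ∈ Finset.univ.erase x₀, p y = 0 := by
    have := hp.2
    rw [← Finset.add_sum_erase _ _ (Finset.mem_univ x₀), h] at this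
    linarith
  exact (Finset.sum_eq_zero_iff_of_nonneg fun y _ => hp.1 y).1 hrest x (by simp [hx])

theorem IsDist.eq_single_of_le_sum_mul {X : Type} [Fintype X] [DecidableEq X] {p g : X → ℝ}
    {x₀ : X} (hp : IsDist p) (hg : ∀ x ≠ x₀, g x < g x₀) (h : g x₀ ≤ ∑ x, p x * g x) :
    p = Pi.single x₀ 1 := by
  have hgap : ∀ x, 0 ≤ p x * (g x₀ - g x) := fun x => by
    by_cases hx : x = x₀
    · simp [hx]
    · exact mul_nonneg (hp.1 x) (sub_nonneg.2 (hg x hx).le)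
  have hsum : ∑ x, p x * (g x₀ - g x) = 0 := by
    refine le_antisymm ?_ (Finset.sum_nonneg fun x _ => hgap x)
    simp only [mul_sub, Finset.sum_sub_distrib, ← Finset.sum_mul, hp.2, one_mul]
    linarith
  refine hp.eq_single_of_eq_zero fun x hx => ?_
  have := (Finset.sum_eq_zero_iff_of_nonneg fun x _ => hgap x).1 hsum x (Finset.mem_univ x)
  exact (mul_eq_zero.1 this).resolve_right (sub_ne_zero.2 (hg x hx).ne')

theorem IsDist.add_smul_sub {X : Type} [Fintype X] {p q : X → ℝ} (hp : IsDist p)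
    (hq : IsDist q) {ε : ℝ} (hε₀ : 0 ≤ ε) (hε₁ : ε ≤ 1) : IsDist (p + ε • (q - p)) := by
  refine ⟨fun x => ?_, ?_⟩
  · have := hp.1 x; have := hq.1 x
    simp only [Pi.add_apply, Pi.smul_apply, Pi.sub_apply, smul_eq_mul]
    nlinarith
  · simp [Finset.sum_add_distrib, ← Finset.mul_sum, hp.2, hq.2]

def pureStrategy {X Y : Type} [DecidableEq Y] (f : X → Y) : X → Y → ℝ :=
  fun x => Pi.single (f x) 1

theorem isMsg_pureStrategy [Fintype M] [DecidableEq M] (f : Ω → M) : IsMsg (pureStrategy f) :=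
  fun ω => isDist_single (f ω)

theorem isAct_pureStrategy [Fintype A] [DecidableEq A] (B : M → A) : IsAct (pureStrategy B) :=
  fun m => isDist_single (B m)

theorem partitional_pureStrategy [DecidableEq M] (f : Ω → M) :
    Partitional (pureStrategy f) :=
  fun ω => ⟨f ω, by simp [pureStrategy]⟩

section Payoffs

variable [Fintype Ω] (μ₀ : Ω → ℝ) (u : A × Ω → ℝ)

/-- Receiver's expected payoff from `a` after `m`, scaled by the probability of `m`. -/
def payoffAfter (σ : Ω → M → ℝ) (m : M) (a : A) : ℝ :=
  ∑ ω, μ₀ ω * σ ω m * u (a, ω)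

theorem U_eq_sum_payoffAfter [Fintype A] [Fintype M] (σ : Ω → M → ℝ) (ρ : M → A → ℝ) :
    U μ₀ u σ ρ = ∑ m, ∑ a, ρ m a * payoffAfter μ₀ u σ m a := by
  simp only [U, payoffAfter, Finset.mul_sum]
  rw [Finset.sum_comm]
  refine Finset.sum_congr rfl fun m _ => ?_
  rw [Finset.sum_comm]
  exact Finset.sum_congr rfl fun a _ => Finset.sum_congr rfl fun ω _ => by ring

theorem payoffAfter_add_smul (σ δ : Ω → M → ℝ) (ε : ℝ) (m : M) (a : A) :
    payoffAfter μ₀ u (σ + ε • δ) m a = payoffAfter μ₀ u σ m a + ε * payoffAfter μ₀ u δ m a := by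
  simp only [payoffAfter, Pi.add_apply, Pi.smul_apply, smul_eq_mul, Finset.mul_sum,
    ← Finset.sum_add_distrib]
  exact Finset.sum_congr rfl fun ω _ => by ring

theorem U_add_smul [Fintype A] [Fintype M] (σ δ : Ω → M → ℝ) (ε : ℝ) (ρ : M → A → ℝ) :
    U μ₀ u (σ + ε • δ) ρ = U μ₀ u σ ρ + ε * U μ₀ u δ ρ := by
  simp only [U_eq_sum_payoffAfter, payoffAfter_add_smul, Finset.mul_sum, mul_add,
    ← Finset.sum_add_distrib]
  exact Finset.sum_congr rfl fun m _ => Finset.sum_congr rfl fun a _ => by ring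

theorem payoffAfter_single [DecidableEq Ω] (ω₀ : Ω) (d : M → ℝ) (m : M) (a : A) :
    payoffAfter μ₀ u (Pi.single ω₀ d) m a = μ₀ ω₀ * d m * u (a, ω₀) := by
  rw [payoffAfter, Finset.sum_eq_single ω₀ (fun ω _ hω => by simp [hω]) (by simp)]
  simp

theorem U_pureStrategy_right [Fintype A] [Fintype M] [DecidableEq A] (σ : Ω → M → ℝ)
    (B : M → A) : U μ₀ u σ (pureStrategy B) = ∑ ω, ∑ m, μ₀ ω * σ ω m * u (B m, ω) := by
  simp [U, pureStrategy, Pi.single_apply]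

theorem U_single_pureStrategy [Fintype A] [Fintype M] [DecidableEq Ω] [DecidableEq A] (ω₀ : Ω)
    (d : M → ℝ) (B : M → A) :
    U μ₀ u (Pi.single ω₀ d) (pureStrategy B) = μ₀ ω₀ * ∑ m, d m * u (B m, ω₀) := by
  rw [U_pureStrategy_right, Finset.sum_eq_single ω₀ (fun ω _ hω => by simp [hω]) (by simp),
    Finset.mul_sum]
  simp [mul_assoc]

theorem U_le_one [Fintype A] [Fintype M] (hμ : IsPrior μ₀) (hu : ∀ p, u p ≤ 1)
    {σ : Ω → M → ℝ} {ρ : M → A → ℝ} (hσ : IsMsg σ) (hρ : IsAct ρ) : U μ₀ u σ ρ ≤ 1 := by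
  have hμ' : IsDist μ₀ := ⟨fun ω => (hμ.1 ω).le, hμ.2⟩
  calc U μ₀ u σ ρ = ∑ ω, μ₀ ω * ∑ m, σ ω m * ∑ a, ρ m a * u (a, ω) := by
        simp only [U, Finset.mul_sum, mul_assoc]
    _ ≤ 1 := hμ'.sum_mul_le fun ω => (hσ ω).sum_mul_le fun m => (hρ m).sum_mul_le fun a => hu _


theorem U_pureStrategy_left [Fintype A] [Fintype M] [DecidableEq M] (f : Ω → M) (ρ : M → A → ℝ) :
    U μ₀ u (pureStrategy f) ρ = ∑ ω, ∑ a, μ₀ ω * ρ (f ω) a * u (a, ω) := by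
  simp [U, pureStrategy, Pi.single_apply]

theorem U_pureStrategy_pureStrategy [Fintype A] [Fintype M] [DecidableEq M] [DecidableEq A]
    (f : Ω → M) (B : M → A) :
    U μ₀ u (pureStrategy f) (pureStrategy B) = ∑ ω, μ₀ ω * u (B (f ω), ω) := by
  simp [U_pureStrategy_left, pureStrategy, Pi.single_apply]

def cell [DecidableEq M] (f : Ω → M) (m : M) : Finset Ω :=
  Finset.univ.filter fun ω => f ω = m

theorem mem_cell [DecidableEq M] {f : Ω → M} {m : M} {ω : Ω} : ω ∈ cell f m ↔ f ω = m := by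
  simp [cell]

theorem payoffAfter_pureStrategy [DecidableEq M] (f : Ω → M) (m : M) (a : A) :
    payoffAfter μ₀ u (pureStrategy f) m a = ∑ ω ∈ cell f m, μ₀ ω * u (a, ω) := by
  simp [payoffAfter, cell, pureStrategy, Pi.single_apply, Finset.sum_filter, eq_comm]

theorem RBR_pureStrategy [Fintype A] [Fintype M] [DecidableEq A] {σ : Ω → M → ℝ} {B : M → A}
    (hB : ∀ m a, payoffAfter μ₀ u σ m a ≤ payoffAfter μ₀ u σ m (B m)) :
    RBR μ₀ u σ (pureStrategy B) := by
  intro ρ hρ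
  simp only [U_eq_sum_payoffAfter]
  refine Finset.sum_le_sum fun m _ => ?_
  simpa [pureStrategy, Pi.single_apply] using (hρ m).sum_mul_le (hB m)

theorem RBR.sum_mul_le [Fintype A] [Fintype M] [DecidableEq M] {σ : Ω → M → ℝ}
    {ρ : M → A → ℝ} (h : RBR μ₀ u σ ρ) (hρ : IsAct ρ) (m : M) {q : A → ℝ} (hq : IsDist q) :
    ∑ a, q a * payoffAfter μ₀ u σ m a ≤ ∑ a, ρ m a * payoffAfter μ₀ u σ m a := by
  have hupd : IsAct (Function.update ρ m q) := fun m' => by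
    by_cases hm : m' = m
    · subst hm; simpa using hq
    · simpa [hm] using hρ m'
  have hrest : ∑ m' ∈ Finset.univ.erase m, ∑ a, Function.update ρ m q m' a * payoffAfter μ₀ u σ m' a
      = ∑ m' ∈ Finset.univ.erase m, ∑ a, ρ m' a * payoffAfter μ₀ u σ m' a :=
    Finset.sum_congr rfl fun m' hm' => by rw [Function.update_of_ne (Finset.ne_of_mem_erase hm')]
  have := h _ hupd
  simp only [U_eq_sum_payoffAfter, ← Finset.add_sum_erase _ _ (Finset.mem_univ m),
    Function.update_self, hrest] at this
  linarith

theorem RBR.eq_single [Fintype A] [Fintype M] [DecidableEq M] [DecidableEq A] {σ : Ω → M → ℝ}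
    {ρ : M → A → ℝ} (h : RBR μ₀ u σ ρ) (hρ : IsAct ρ) {m : M} {a₀ : A}
    (hstrict : ∀ a ≠ a₀, payoffAfter μ₀ u σ m a < payoffAfter μ₀ u σ m a₀) :
    ρ m = Pi.single a₀ 1 :=
  (hρ m).eq_single_of_le_sum_mul hstrict <| by
    simpa [Pi.single_apply] using h.sum_mul_le μ₀ u hρ m (isDist_single a₀)

theorem SBR_pureStrategy [Fintype A] [Fintype M] [DecidableEq M] [DecidableEq A]
    (hμ : ∀ ω, 0 ≤ μ₀ ω) {f : Ω → M} {B : M → A} (hob : ∀ m ω, u (B m, ω) ≤ u (B (f ω), ω)) :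
    SBR μ₀ u (pureStrategy f) (pureStrategy B) := by
  intro σ hσ
  rw [U_pureStrategy_right, U_pureStrategy_pureStrategy]
  refine Finset.sum_le_sum fun ω _ => ?_
  simp only [mul_assoc, ← Finset.mul_sum]
  exact mul_le_mul_of_nonneg_left ((hσ ω).sum_mul_le fun m => hob m ω) (hμ ω)

theorem eventually_payoffAfter_add_smul_le [Finite A] [Finite M] {σ δ : Ω → M → ℝ} {B : M → A}
    (hle : ∀ m a, payoffAfter μ₀ u σ m a ≤ payoffAfter μ₀ u σ m (B m))
    (hstable : ∀ m, (∀ a ≠ B m, payoffAfter μ₀ u σ m a < payoffAfter μ₀ u σ m (B m)) ∨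
      ∀ a, payoffAfter μ₀ u δ m a = 0) :
    ∀ᶠ ε in 𝓝 (0 : ℝ), ∀ m a,
      payoffAfter μ₀ u (σ + ε • δ) m a ≤ payoffAfter μ₀ u (σ + ε • δ) m (B m) := by
  simp only [payoffAfter_add_smul]
  refine eventually_all.2 fun m => eventually_all.2 fun a => ?_
  rcases hstable m with hstrict | hzero
  · by_cases ha : a = B m
    · exact .of_forall fun _ => ha ▸ le_rfl
    · refine (ContinuousAt.eventually_lt (by fun_prop) (by fun_prop) ?_).mono fun _ => le_of_lt
      simpa using hstrict a ha
  · exact .of_forall fun _ => by simpa [hzero] using hle m a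

end Payoffs

section BestAction

variable [Fintype A] [Nonempty A] (μ₀ : Ω → ℝ) (uR : A × Ω → ℝ)

noncomputable def bestAction (S : Finset Ω) : A :=
  (Finset.exists_max_image Finset.univ (fun a => ∑ ω ∈ S, μ₀ ω * uR (a, ω))
    Finset.univ_nonempty).choose

theorem le_bestAction (S : Finset Ω) (b : A) :
    ∑ ω ∈ S, μ₀ ω * uR (b, ω) ≤ ∑ ω ∈ S, μ₀ ω * uR (bestAction μ₀ uR S, ω) :=
  (Finset.exists_max_image Finset.univ (fun a => ∑ ω ∈ S, μ₀ ω * uR (a, ω))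
    Finset.univ_nonempty).choose_spec.2 b (Finset.mem_univ b)

variable {μ₀ uR}

theorem PUR.lt_bestAction (h : PUR μ₀ uR) {S : Finset Ω} (hS : S.Nonempty) {b : A}
    (hb : b ≠ bestAction μ₀ uR S) :
    ∑ ω ∈ S, μ₀ ω * uR (b, ω) < ∑ ω ∈ S, μ₀ ω * uR (bestAction μ₀ uR S, ω) := by
  refine (le_bestAction μ₀ uR S b).lt_of_ne fun heq => hb ((h S hS).unique ?_ ?_)
  · exact fun c => heq ▸ le_bestAction μ₀ uR S c
  · exact le_bestAction μ₀ uR S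

theorem exists_tie_of_not_PUR (h : ¬ PUR μ₀ uR) :
    ∃ S : Finset Ω, S.Nonempty ∧ ∃ a b : A, a ≠ b ∧
      ∑ ω ∈ S, μ₀ ω * uR (a, ω) = ∑ ω ∈ S, μ₀ ω * uR (b, ω) := by
  simp only [PUR, not_forall, exists_prop] at h
  obtain ⟨S, hS, hnot⟩ := h
  obtain ⟨a, ha, hab⟩ : ∃ a, (∀ c, ∑ ω ∈ S, μ₀ ω * uR (c, ω) ≤ ∑ ω ∈ S, μ₀ ω * uR (a, ω)) ∧
      a ≠ bestAction μ₀ uR S := by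
    by_contra! hall
    exact hnot ⟨bestAction μ₀ uR S, le_bestAction μ₀ uR S, hall⟩
  exact ⟨S, hS, a, _, hab, le_antisymm (le_bestAction μ₀ uR S a) (ha _)⟩

end BestAction

section Partition

variable [Fintype Ω] [Fintype A] [Nonempty Ω] [Nonempty A] [DecidableEq M] {μ₀ : Ω → ℝ}
  {uR : A × Ω → ℝ}

variable (μ₀ uR) in
/-- An off-path message is answered like the message sent in some fixed state, so that it is
never a profitable deviation for Sender. -/
noncomputable def partResponse (f : Ω → M) (m : M) : A :=
  bestAction μ₀ uR (cell f (if (cell f m).Nonempty then m else f (Classical.arbitrary Ω)))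

theorem partResponse_of_nonempty {f : Ω → M} {m : M} (h : (cell f m).Nonempty) :
    partResponse μ₀ uR f m = bestAction μ₀ uR (cell f m) := by
  simp [partResponse, h]

theorem partResponse_apply (f : Ω → M) (ω : Ω) :
    partResponse μ₀ uR f (f ω) = bestAction μ₀ uR (cell f (f ω)) :=
  partResponse_of_nonempty ⟨ω, mem_cell.2 rfl⟩

theorem exists_partResponse_eq (f : Ω → M) (m : M) :
    ∃ ω, partResponse μ₀ uR f m = partResponse μ₀ uR f (f ω) := by
  by_cases h : (cell f m).Nonempty
  · obtain ⟨ω, hω⟩ := h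
    exact ⟨ω, by rw [mem_cell.1 hω]⟩
  · exact ⟨Classical.arbitrary Ω, by rw [partResponse_apply]; simp [partResponse, h]⟩

theorem payoffAfter_le_partResponse (f : Ω → M) (m : M) (a : A) :
    payoffAfter μ₀ uR (pureStrategy f) m a
      ≤ payoffAfter μ₀ uR (pureStrategy f) m (partResponse μ₀ uR f m) := by
  simp only [payoffAfter_pureStrategy]
  by_cases h : (cell f m).Nonempty
  · rw [partResponse_of_nonempty h]
    exact le_bestAction μ₀ uR _ a
  · simp [Finset.not_nonempty_iff_eq_empty.1 h]

theorem PUR.payoffAfter_lt_partResponse (hPUR : PUR μ₀ uR) {f : Ω → M} {m : M}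
    (h : (cell f m).Nonempty) {a : A} (ha : a ≠ partResponse μ₀ uR f m) :
    payoffAfter μ₀ uR (pureStrategy f) m a
      < payoffAfter μ₀ uR (pureStrategy f) m (partResponse μ₀ uR f m) := by
  rw [partResponse_of_nonempty h] at ha ⊢
  simp only [payoffAfter_pureStrategy]
  exact hPUR.lt_bestAction h ha

theorem RBR_partResponse [Fintype M] [DecidableEq A] (f : Ω → M) :
    RBR μ₀ uR (pureStrategy f) (pureStrategy (partResponse μ₀ uR f)) :=
  RBR_pureStrategy μ₀ uR (payoffAfter_le_partResponse f)

theorem PUR.U_eq_of_partitional [Fintype M] [DecidableEq A] (hPUR : PUR μ₀ uR)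
    (uS : A × Ω → ℝ) {σ : Ω → M → ℝ} {ρ : M → A → ℝ} (hσ : IsMsg σ) (hpart : Partitional σ)
    (hρ : IsAct ρ) (hR : RBR μ₀ uR σ ρ) :
    ∃ f : Ω → M, U μ₀ uS σ ρ = U μ₀ uS (pureStrategy f) (pureStrategy (partResponse μ₀ uR f)) := by
  choose f hf using hpart
  obtain rfl : σ = pureStrategy f := funext fun ω => (hσ ω).eq_single_of_eq_one (hf ω)
  refine ⟨f, ?_⟩
  rw [U_pureStrategy_left, U_pureStrategy_left]
  refine Finset.sum_congr rfl fun ω _ => ?_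
  rw [hR.eq_single μ₀ uR hρ fun a ha => hPUR.payoffAfter_lt_partResponse ⟨ω, mem_cell.2 rfl⟩ ha]
  rfl

/-- Sending `m` with small probability in state `ω₁` keeps Receiver's replies optimal, since
on-path replies are strict best replies and off-path messages are not touched. -/
theorem PUR.exists_persProfile_gt [Fintype M] [DecidableEq A] (hμ : ∀ ω, 0 < μ₀ ω)
    (hPUR : PUR μ₀ uR) (uS : A × Ω → ℝ) {f : Ω → M} {m : M} (hm : (cell f m).Nonempty) {ω₁ : Ω}
    (hdev : uS (partResponse μ₀ uR f (f ω₁), ω₁) < uS (partResponse μ₀ uR f m, ω₁)) :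
    ∃ (σ : Ω → M → ℝ) (ρ : M → A → ℝ), PersProfile μ₀ uR σ ρ ∧
      U μ₀ uS (pureStrategy f) (pureStrategy (partResponse μ₀ uR f)) < U μ₀ uS σ ρ := by
  classical
  set B := partResponse μ₀ uR f
  set δ : Ω → M → ℝ := Pi.single ω₁ (Pi.single m 1 - pureStrategy f ω₁)
  have hstable : ∀ᶠ ε in 𝓝 (0 : ℝ), ∀ m' a, payoffAfter μ₀ uR (pureStrategy f + ε • δ) m' a
      ≤ payoffAfter μ₀ uR (pureStrategy f + ε • δ) m' (B m') := by
    refine eventually_payoffAfter_add_smul_le μ₀ uR (payoffAfter_le_partResponse f) fun m' => ?_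
    by_cases hm' : (cell f m').Nonempty
    · exact .inl fun a ha => hPUR.payoffAfter_lt_partResponse hm' ha
    · have hne : m' ≠ m := fun h => hm' (h ▸ hm)
      have hne₁ : m' ≠ f ω₁ := fun h => hm' ⟨ω₁, mem_cell.2 h.symm⟩
      exact .inr fun a => by
        simp [δ, payoffAfter_single, pureStrategy, hne, hne₁]
  obtain ⟨ε, hRBR, hε⟩ :=
    ((hstable.filter_mono nhdsWithin_le_nhds).and (Ioc_mem_nhdsGT one_pos)).exists
  refine ⟨pureStrategy f + ε • δ, pureStrategy B,
    ⟨fun ω => ?_, isAct_pureStrategy B, RBR_pureStrategy μ₀ uR hRBR⟩, ?_⟩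
  · by_cases hω : ω = ω₁
    · subst hω
      simpa [δ] using (isMsg_pureStrategy f ω).add_smul_sub (isDist_single m) hε.1.le hε.2
    · simpa [δ, hω] using isMsg_pureStrategy f ω
  · rw [U_add_smul, U_single_pureStrategy]
    simp only [pureStrategy, Pi.sub_apply, sub_mul, Finset.sum_sub_distrib]
    simp only [Pi.single_apply, ite_mul, one_mul, zero_mul, Finset.sum_ite_eq', Finset.mem_univ,
      if_true, lt_add_iff_pos_right]
    exact mul_pos hε.1 (mul_pos (hμ ω₁) (sub_pos.2 hdev))

end Partition

section Commitment

variable [Fintype Ω] [Fintype A] [Fintype M] {μ₀ : Ω → ℝ} {uS uR : A × Ω → ℝ}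
  {σ : Ω → M → ℝ} {ρ : M → A → ℝ}

theorem le_persPayoff (hμ : IsPrior μ₀) (huS : ∀ p, uS p ≤ 1) (h : PersProfile μ₀ uR σ ρ) :
    U μ₀ uS σ ρ ≤ persPayoff (M := M) μ₀ uS uR :=
  le_csSup ⟨1, by rintro _ ⟨σ, ρ, ⟨hσ, hρ, -⟩, rfl⟩; exact U_le_one μ₀ uS hμ huS hσ hρ⟩
    ⟨σ, ρ, h, rfl⟩

theorem le_partCtPayoff (hμ : IsPrior μ₀) (huS : ∀ p, uS p ≤ 1) (hpart : Partitional σ)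
    (h : CTEq μ₀ uS uR σ ρ) : U μ₀ uS σ ρ ≤ partCtPayoff (M := M) μ₀ uS uR :=
  le_csSup ⟨1, by rintro _ ⟨σ, ρ, -, ⟨hσ, hρ, -⟩, rfl⟩; exact U_le_one μ₀ uS hμ huS hσ hρ⟩
    ⟨σ, ρ, hpart, h, rfl⟩

theorem CTEq.persProfile (h : CTEq μ₀ uS uR σ ρ) : PersProfile μ₀ uR σ ρ :=
  ⟨h.1, h.2.1, h.2.2.2⟩

theorem PUR.ctPayoff_le_partCtPayoff [Nonempty Ω] [Nonempty A] [Nonempty M] (hμ : IsPrior μ₀)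
    (huS : ∀ p, uS p ≤ 1) (hPUR : PUR μ₀ uR)
    (h : persPayoff (M := M) μ₀ uS uR ≤ partPersPayoff (M := M) μ₀ uS uR) :
    ctPayoff (M := M) μ₀ uS uR ≤ partCtPayoff (M := M) μ₀ uS uR := by
  classical
  obtain ⟨f, -, hf⟩ := Finset.exists_max_image Finset.univ
    (fun f : Ω → M => U μ₀ uS (pureStrategy f) (pureStrategy (partResponse μ₀ uR f)))
    Finset.univ_nonempty
  set B := partResponse μ₀ uR f
  have hpers : PersProfile μ₀ uR (pureStrategy f) (pureStrategy B) :=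
    ⟨isMsg_pureStrategy f, isAct_pureStrategy B, RBR_partResponse f⟩
  have hpartPers :
      partPersPayoff (M := M) μ₀ uS uR ≤ U μ₀ uS (pureStrategy f) (pureStrategy B) := by
    refine csSup_le ⟨_, _, _, partitional_pureStrategy f, hpers, rfl⟩ ?_
    rintro _ ⟨σ, ρ, hpart, ⟨hσ, hρ, hR⟩, rfl⟩
    obtain ⟨g, hg⟩ := hPUR.U_eq_of_partitional uS hσ hpart hρ hR
    exact hg ▸ hf g (Finset.mem_univ g)
  have hobedient : ∀ m ω, uS (B m, ω) ≤ uS (B (f ω), ω) := by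
    intro m ω
    obtain ⟨ω', hω'⟩ : ∃ ω', B m = B (f ω') := exists_partResponse_eq f m
    rw [hω']
    by_contra! hdev
    obtain ⟨σ, ρ, hσρ, hlt⟩ :=
      hPUR.exists_persProfile_gt hμ.1 uS ⟨ω', mem_cell.2 rfl⟩ hdev
    linarith [le_persPayoff hμ huS hσρ]
  have hCT : CTEq μ₀ uS uR (pureStrategy f) (pureStrategy B) :=
    ⟨hpers.1, hpers.2.1, SBR_pureStrategy μ₀ uS (fun ω => (hμ.1 ω).le) hobedient, hpers.2.2⟩
  calc ctPayoff (M := M) μ₀ uS uR ≤ persPayoff (M := M) μ₀ uS uR :=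
        csSup_le ⟨_, _, _, hCT, rfl⟩ fun _ ⟨σ, ρ, hσρ, hx⟩ =>
          hx ▸ le_persPayoff hμ huS hσρ.persProfile
    _ ≤ partPersPayoff (M := M) μ₀ uS uR := h
    _ ≤ U μ₀ uS (pureStrategy f) (pureStrategy B) := hpartPers
    _ ≤ partCtPayoff (M := M) μ₀ uS uR := le_partCtPayoff hμ huS (partitional_pureStrategy f) hCT

end Commitment

theorem volume_setOf_not_PUR [Fintype Ω] [Fintype A] [Nonempty A] {μ₀ : Ω → ℝ}
    (hμ : ∀ ω, 0 < μ₀ ω) : volume {uR : A × Ω → ℝ | ¬ PUR μ₀ uR} = 0 := by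
  classical
  let tie (p : Finset Ω × A × A) : (A × Ω → ℝ) →ₗ[ℝ] ℝ :=
    ∑ ω ∈ p.1, μ₀ ω • (LinearMap.proj (R := ℝ) (φ := fun _ : A × Ω => ℝ) (p.2.1, ω) -
      LinearMap.proj (p.2.2, ω))
  have tie_apply (p : Finset Ω × A × A) (uR : A × Ω → ℝ) :
      tie p uR = ∑ ω ∈ p.1, μ₀ ω * uR (p.2.1, ω) - ∑ ω ∈ p.1, μ₀ ω * uR (p.2.2, ω) := by
    simp [tie, LinearMap.sum_apply, mul_sub]
  have hsub : {uR : A × Ω → ℝ | ¬ PUR μ₀ uR} ⊆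
      ⋃ p : {p : Finset Ω × A × A // p.1.Nonempty ∧ p.2.1 ≠ p.2.2}, LinearMap.ker (tie p) := by
    intro uR huR
    obtain ⟨S, hS, a, b, hab, htie⟩ := exists_tie_of_not_PUR huR
    exact Set.mem_iUnion.2 ⟨⟨(S, a, b), hS, hab⟩, by simp [tie_apply, htie]⟩
  refine measure_mono_null hsub (measure_iUnion_null fun ⟨⟨S, a, b⟩, ⟨ω, hω⟩, hab⟩ => ?_)
  refine Measure.addHaar_submodule _ _ fun htop => (hμ ω).ne' ?_
  have := LinearMap.ker_eq_top.1 htop ▸ tie_apply (S, a, b) (Pi.single (a, ω) 1)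
  simpa [Pi.single_apply, hab.symm, hω] using this.symm

/-- Corollary (Kamenica–Lin): generically, if cheap-talk Sender values
randomization then committed Sender values randomization. -/
theorem cheapTalk_randomization_implies_committed_randomization
    (Ω A M : Type) [Fintype Ω] [Fintype A] [Fintype M]
    [Nonempty Ω] [Nonempty A]
    (hM : max (Fintype.card Ω) (Fintype.card A) < Fintype.card M)
    (μ₀ : Ω → ℝ) (hμ : IsPrior μ₀) :
    ∃ G : Set ((A × Ω → ℝ) × (A × Ω → ℝ)),
      G ⊆ EnvCube Ω A ∧
      volume (EnvCube Ω A \ G) = 0 ∧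
      ∀ e ∈ G,
        partCtPayoff (M := M) μ₀ e.1 e.2 < ctPayoff (M := M) μ₀ e.1 e.2 →
        partPersPayoff (M := M) μ₀ e.1 e.2 < persPayoff (M := M) μ₀ e.1 e.2 := by
  have : Nonempty M := Fintype.card_pos_iff.1 (Nat.zero_lt_of_lt hM)
  refine ⟨EnvCube Ω A ∩ {e | PUR μ₀ e.2}, Set.inter_subset_left, ?_, ?_⟩
  · have hnull : volume ((Set.univ : Set (A × Ω → ℝ)) ×ˢ {uR : A × Ω → ℝ | ¬ PUR μ₀ uR}) = 0 := by
      rw [Measure.volume_eq_prod, Measure.prod_prod, volume_setOf_not_PUR hμ.1, mul_zero]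
    refine measure_mono_null (fun e he => ?_) hnull
    exact Set.mem_prod.2 ⟨Set.mem_univ _, fun h => he.2 ⟨he.1, h⟩⟩
  · rintro ⟨uS, uR⟩ ⟨hcube, hPUR⟩ hct
    by_contra! h
    exact (hPUR.ctPayoff_le_partCtPayoff hμ (fun p => (hcube.1 p).2) h).not_gt hct

end KL
end

section
/- Fix nonempty finite sets Ω and A, a finite message set M with |M| > max{|Ω|, |A|}, and an interior prior μ₀ on Ω. Then the share of environments (u_S, u_R) such that commitment has no value is at least 1/|A|^{|A|}. -/
open MeasureTheory

namespace KL

variable {Ω A M : Type} [Fintype Ω] [Fintype A] [Fintype M]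

/-! ### Auxiliary definitions for the proof -/

/-- The per-player cube `[0,1]^X`. -/
def Cube (X : Type) : Set (X → ℝ) := {u | ∀ p, u p ∈ Set.Icc (0 : ℝ) 1}

/-- The set of utilities for which `g ω` is the strict argmax in every state `ω`. -/
def AgSet (g : Ω → A) : Set (A × Ω → ℝ) :=
  {u | ∀ ω b, b ≠ g ω → u (b, ω) < u (g ω, ω)}

/-- Receiver's expected payoff of action `b` on the cell `g⁻¹ a`. -/
def cellSum [DecidableEq A] (μ₀ : Ω → ℝ) (g : Ω → A) (a b : A) (u : A × Ω → ℝ) : ℝ :=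
  ∑ ω, if g ω = a then μ₀ ω * u (b, ω) else 0

/-- The set of receiver utilities for which `c a` is a best response to cell `g⁻¹ a`. -/
def EcSet [DecidableEq A] (μ₀ : Ω → ℝ) (g : Ω → A) (c : A → A) : Set (A × Ω → ℝ) :=
  {u | ∀ a b, cellSum μ₀ g a b u ≤ cellSum μ₀ g a (c a) u}

lemma U_le (μ₀ : Ω → ℝ) (hμ : IsPrior μ₀) (u : A × Ω → ℝ) (c : Ω → ℝ)
    (hc : ∀ a ω, u (a, ω) ≤ c ω) {σ : Ω → M → ℝ} {ρ : M → A → ℝ}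
    (hσ : IsMsg σ) (hρ : IsAct ρ) : U μ₀ u σ ρ ≤ ∑ ω, μ₀ ω * c ω := by
  unfold U
  apply Finset.sum_le_sum
  intro ω _
  calc ∑ m, ∑ a, μ₀ ω * σ ω m * ρ m a * u (a, ω)
      ≤ ∑ m, ∑ a, μ₀ ω * σ ω m * ρ m a * c ω := by
        refine Finset.sum_le_sum fun m _ => Finset.sum_le_sum fun a _ => ?_
        have h0 : 0 ≤ μ₀ ω * σ ω m * ρ m a :=
          mul_nonneg (mul_nonneg (hμ.1 ω).le ((hσ ω).1 m)) ((hρ m).1 a)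
        exact mul_le_mul_of_nonneg_left (hc a ω) h0
    _ = μ₀ ω * c ω := by
        calc ∑ m, ∑ a, μ₀ ω * σ ω m * ρ m a * c ω
            = ∑ m, (μ₀ ω * c ω * σ ω m) * ∑ a, ρ m a := by
              refine Finset.sum_congr rfl fun m _ => ?_
              rw [Finset.mul_sum]
              exact Finset.sum_congr rfl fun a _ => by ring
          _ = ∑ m, (μ₀ ω * c ω) * σ ω m := by
              refine Finset.sum_congr rfl fun m _ => by rw [(hρ m).2, mul_one]
          _ = μ₀ ω * c ω := by rw [← Finset.mul_sum, (hσ ω).2, mul_one]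

lemma U_eq_sum_W (μ₀ : Ω → ℝ) (u : A × Ω → ℝ) (σ : Ω → M → ℝ) (ρ : M → A → ℝ) :
    U μ₀ u σ ρ = ∑ m, ∑ a, ρ m a * ∑ ω, μ₀ ω * σ ω m * u (a, ω) := by
  unfold U
  rw [Finset.sum_comm]
  refine Finset.sum_congr rfl fun m _ => ?_
  rw [Finset.sum_comm]
  refine Finset.sum_congr rfl fun a _ => ?_
  rw [Finset.mul_sum]
  exact Finset.sum_congr rfl fun ω _ => by ring

lemma pers_le_ct [DecidableEq A] [DecidableEq M] [Nonempty A]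
    (μ₀ : Ω → ℝ) (hμ : IsPrior μ₀) (uS uR : A × Ω → ℝ)
    (hScube : uS ∈ Cube (A × Ω))
    (g : Ω → A) (hAg : ∀ a ω, uS (a, ω) ≤ uS (g ω, ω))
    (hB : uR ∈ EcSet μ₀ g id)
    (hMA : Fintype.card A ≤ Fintype.card M) :
    persPayoff (M := M) μ₀ uS uR ≤ ctPayoff (M := M) μ₀ uS uR := by
  obtain ⟨ι⟩ : Nonempty (A ↪ M) := Function.Embedding.nonempty_iff_card_le.2 hMA
  set V : ℝ := ∑ ω, μ₀ ω * uS (g ω, ω) with hV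
  have hVnn : 0 ≤ V :=
    Finset.sum_nonneg fun ω _ => mul_nonneg (hμ.1 ω).le (hScube _).1
  set r : M → A := fun m => if h : ∃ b, ι b = m then h.choose else Classical.arbitrary A with hr
  have hrι : ∀ b, r (ι b) = b := by
    intro b
    have h : ∃ b', ι b' = ι b := ⟨b, rfl⟩
    simp only [hr, dif_pos h]
    exact ι.injective h.choose_spec
  set σ : Ω → M → ℝ := fun ω m => if m = ι (g ω) then 1 else 0 with hσdef
  set ρ : M → A → ℝ := fun m a => if a = r m then 1 else 0 with hρdef
  have hσmsg : IsMsg σ := by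
    intro ω
    constructor
    · intro m; simp only [hσdef]; split <;> norm_num
    · simp [hσdef]
  have hρact : IsAct ρ := by
    intro m
    constructor
    · intro a; simp only [hρdef]; split <;> norm_num
    · simp [hρdef]
  have hUeq : ∀ u : A × Ω → ℝ, U μ₀ u σ ρ = ∑ ω, μ₀ ω * u (g ω, ω) := by
    intro u
    unfold U
    refine Finset.sum_congr rfl fun ω _ => ?_
    have h1 : ∀ m, ∑ a, μ₀ ω * σ ω m * ρ m a * u (a, ω) = σ ω m * (μ₀ ω * u (r m, ω)) := by
      intro m
      rw [Finset.sum_eq_single (r m)]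
      · simp only [hρdef, if_pos rfl]; ring
      · intro b _ hb; simp [hρdef, hb]
      · simp
    rw [Finset.sum_congr rfl fun m _ => h1 m, Finset.sum_eq_single (ι (g ω))]
    · simp [hσdef, hrι]
    · intro m _ hm; simp [hσdef, hm]
    · simp
  have hW : ∀ m a, (∑ ω, μ₀ ω * σ ω m * uR (a, ω)) ≤ ∑ ω, μ₀ ω * σ ω m * uR (r m, ω) := by
    intro m a
    by_cases hm : ∃ b, ι b = m
    · obtain ⟨b, rfl⟩ := hm
      have h1 : ∀ a', (∑ ω, μ₀ ω * σ ω (ι b) * uR (a', ω))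
          = cellSum μ₀ g b a' uR := by
        intro a'
        refine Finset.sum_congr rfl fun ω _ => ?_
        by_cases h : g ω = b
        · simp [cellSum, hσdef, h]
        · have hne : (ι b : M) ≠ ι (g ω) := fun hc => h (ι.injective hc.symm)
          simp [cellSum, hσdef, h, hne]
      rw [h1, h1, hrι]
      exact hB b a
    · have hz : ∀ ω, σ ω m = 0 := by
        intro ω
        simp only [hσdef]
        exact if_neg fun hc => hm ⟨g ω, hc.symm⟩
      simp [hz]
  have hCT : CTEq μ₀ uS uR σ ρ := by
    refine ⟨hσmsg, hρact, ?_, ?_⟩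
    · intro σ' hσ'
      rw [hUeq uS]
      exact U_le μ₀ hμ uS _ hAg hσ' hρact
    · intro ρ' hρ'
      rw [U_eq_sum_W, U_eq_sum_W]
      refine Finset.sum_le_sum fun m _ => ?_
      calc ∑ a, ρ' m a * ∑ ω, μ₀ ω * σ ω m * uR (a, ω)
          ≤ ∑ a, ρ' m a * ∑ ω, μ₀ ω * σ ω m * uR (r m, ω) :=
            Finset.sum_le_sum fun a _ =>
              mul_le_mul_of_nonneg_left (hW m a) ((hρ' m).1 a)
        _ = ∑ ω, μ₀ ω * σ ω m * uR (r m, ω) := by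
            rw [← Finset.sum_mul, (hρ' m).2, one_mul]
        _ = ∑ a, ρ m a * ∑ ω, μ₀ ω * σ ω m * uR (a, ω) := by
            rw [Finset.sum_eq_single (r m)]
            · simp [hρdef]
            · intro b _ hb; simp [hρdef, hb]
            · simp
  have h1 : persPayoff (M := M) μ₀ uS uR ≤ V := by
    refine Real.sSup_le ?_ hVnn
    rintro x ⟨σ', ρ', ⟨hσ', hρ', -⟩, rfl⟩
    exact U_le μ₀ hμ uS _ hAg hσ' hρ'
  have h2 : V ≤ ctPayoff (M := M) μ₀ uS uR := by
    refine le_csSup ⟨1, ?_⟩ ⟨σ, ρ, hCT, (hUeq uS).symm⟩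
    rintro x ⟨σ', ρ', ⟨hσ', hρ', -, -⟩, rfl⟩
    have := U_le μ₀ hμ uS (fun _ => 1) (fun a ω => (hScube (a, ω)).2) hσ' hρ'
    simpa [hμ.2] using this
  exact h1.trans h2
/-! ### Measure-theoretic lemmas -/

lemma mp_comp {ι : Type} [Fintype ι] (e : ι ≃ ι) :
    MeasurePreserving (fun f : ι → ℝ => f ∘ e) volume volume := by
  have h := MeasureTheory.volume_measurePreserving_piCongrLeft (fun _ : ι => ℝ) e.symm
  have he : ⇑(MeasurableEquiv.piCongrLeft (fun _ : ι => ℝ) e.symm) = fun f : ι → ℝ => f ∘ e := by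
    funext f i
    rw [MeasurableEquiv.coe_piCongrLeft]
    have := Equiv.piCongrLeft_apply_apply (P := fun _ : ι => ℝ) e.symm f (e i)
    simpa using this
  rwa [he] at h

lemma measurableSet_Cube (X : Type) [Fintype X] : MeasurableSet (Cube X) := by
  have h : Cube X = ⋂ p, (fun u : X → ℝ => u p) ⁻¹' Set.Icc 0 1 := by
    ext u; simp [Cube]
  rw [h]
  exact MeasurableSet.iInter fun p => (measurable_pi_apply p) measurableSet_Icc

lemma vol_Cube (X : Type) [Fintype X] : volume (Cube X) = 1 := by
  have h : Cube X = Set.univ.pi (fun _ : X => Set.Icc (0 : ℝ) 1) := by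
    ext u; simp only [Cube, Set.mem_setOf_eq, Set.mem_univ_pi]
  rw [h, volume_pi_pi]
  simp [Real.volume_Icc]

lemma preimage_Cube {ι : Type} [Fintype ι] (e : ι ≃ ι) :
    (fun f : ι → ℝ => f ∘ e) ⁻¹' Cube ι = Cube ι := by
  ext f
  constructor
  · intro h q
    have := h (e.symm q)
    simpa using this
  · intro h p
    exact h (e p)

lemma measurableSet_AgSet (g : Ω → A) : MeasurableSet (AgSet g) := by
  have h : AgSet g = ⋂ ω, ⋂ b, {u : A × Ω → ℝ | b ≠ g ω → u (b, ω) < u (g ω, ω)} := by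
    ext u; simp [AgSet]
  rw [h]
  refine MeasurableSet.iInter fun ω => MeasurableSet.iInter fun b => ?_
  by_cases hb : b = g ω
  · simp only [hb, ne_eq, not_true_eq_false, false_implies, Set.setOf_true]
    exact MeasurableSet.univ
  · have h2 : {u : A × Ω → ℝ | b ≠ g ω → u (b, ω) < u (g ω, ω)}
        = {u : A × Ω → ℝ | u (b, ω) < u (g ω, ω)} := by
      ext u; simp [hb]
    rw [h2]
    exact measurableSet_lt (measurable_pi_apply _) (measurable_pi_apply _)

lemma measurable_cellSum [DecidableEq A] (μ₀ : Ω → ℝ) (g : Ω → A) (a b : A) :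
    Measurable (cellSum μ₀ g a b) := by
  unfold cellSum
  refine Finset.measurable_sum _ fun ω _ => ?_
  by_cases h : g ω = a
  · simp only [if_pos h]
    exact (measurable_pi_apply _).const_mul _
  · simp only [if_neg h]
    exact measurable_const

lemma measurableSet_EcSet [DecidableEq A] (μ₀ : Ω → ℝ) (g : Ω → A) (c : A → A) :
    MeasurableSet (EcSet μ₀ g c) := by
  have h : EcSet μ₀ g c = ⋂ a, ⋂ b, {u | cellSum μ₀ g a b u ≤ cellSum μ₀ g a (c a) u} := by
    ext u; simp [EcSet]
  rw [h]
  exact MeasurableSet.iInter fun a => MeasurableSet.iInter fun b =>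
    measurableSet_le (measurable_cellSum μ₀ g a b) (measurable_cellSum μ₀ g a (c a))

lemma vol_ties_zero :
    volume {u : A × Ω → ℝ | ∃ ω, ∃ a, ∃ b, a ≠ b ∧ u (a, ω) = u (b, ω)} = 0 := by
  have h : {u : A × Ω → ℝ | ∃ ω, ∃ a, ∃ b, a ≠ b ∧ u (a, ω) = u (b, ω)} =
      ⋃ ω, ⋃ a, ⋃ b, {u : A × Ω → ℝ | a ≠ b ∧ u (a, ω) = u (b, ω)} := by
    ext u; simp
  rw [h]
  classical
  refine measure_iUnion_null fun ω => measure_iUnion_null fun a => measure_iUnion_null fun b => ?_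
  by_cases hab : a = b
  · have : {u : A × Ω → ℝ | a ≠ b ∧ u (a, ω) = u (b, ω)} = ∅ := by
      ext u; simp [hab]
    simp [this]
  · set φ : ((A × Ω) → ℝ) →ₗ[ℝ] ℝ :=
      (LinearMap.proj (a, ω) : ((A × Ω) → ℝ) →ₗ[ℝ] ℝ) - LinearMap.proj (b, ω) with hφ
    have hsub : {u : A × Ω → ℝ | a ≠ b ∧ u (a, ω) = u (b, ω)} ⊆ ↑(LinearMap.ker φ) := by
      intro u hu
      simp [hφ, LinearMap.mem_ker, sub_eq_zero, hu.2]
    refine measure_mono_null hsub (Measure.addHaar_submodule _ _ ?_)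
    intro htop
    have hne : ((b, ω) : A × Ω) ≠ (a, ω) := by simp [Prod.ext_iff]; exact fun h => hab h.symm
    have hmem : (Pi.single (a, ω) (1 : ℝ)) ∈ LinearMap.ker φ := htop ▸ Submodule.mem_top
    simp [hφ, LinearMap.mem_ker, Pi.single_eq_same, Pi.single_eq_of_ne hne] at hmem
/-! ### Volume lower bounds via symmetry -/

lemma vol_AgSet_eq [DecidableEq A] (g g' : Ω → A) :
    volume (AgSet g' ∩ Cube (A × Ω)) = volume (AgSet g ∩ Cube (A × Ω)) := by
  set h : Ω → Equiv.Perm A := fun ω => Equiv.swap (g ω) (g' ω) with hh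
  set e : (A × Ω) ≃ (A × Ω) :=
    { toFun := fun p => (h p.2 p.1, p.2)
      invFun := fun p => ((h p.2).symm p.1, p.2)
      left_inv := fun p => by simp
      right_inv := fun p => by simp } with he
  have hpre : (fun f : A × Ω → ℝ => f ∘ e) ⁻¹' (AgSet g' ∩ Cube (A × Ω))
      = AgSet g ∩ Cube (A × Ω) := by
    have hC := preimage_Cube e
    have hA : (fun f : A × Ω → ℝ => f ∘ e) ⁻¹' AgSet g' = AgSet g := by
      ext f
      simp only [Set.mem_preimage, AgSet, Set.mem_setOf_eq, he, Function.comp_apply,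
        Equiv.coe_fn_mk]
      constructor
      · intro hf ω c hc
        have hb : (h ω).symm c ≠ g' ω := by
          intro hcon
          apply hc
          have : c = h ω (g' ω) := by rw [← hcon]; simp
          rw [this, hh]
          exact Equiv.swap_apply_right _ _
        have := hf ω ((h ω).symm c) hb
        simpa [hh, Equiv.swap_apply_right] using this
      · intro hf ω b hb
        have h1 : h ω b ≠ g ω := by
          intro hcon
          apply hb
          have : b = (h ω).symm (g ω) := by rw [← hcon]; simp
          rw [this, hh]
          simp [Equiv.symm_swap, Equiv.swap_apply_right]
        have := hf ω (h ω b) h1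
        have h2 : h ω (g' ω) = g ω := by rw [hh]; exact Equiv.swap_apply_right _ _
        rwa [h2]
    rw [Set.preimage_inter, hA, hC]
  rw [← hpre]
  exact ((mp_comp e).measure_preimage
    ((measurableSet_AgSet g').inter (measurableSet_Cube _)).nullMeasurableSet).symm

lemma vol_AgSet_lb [DecidableEq A] [DecidableEq Ω] [Nonempty A] (g : Ω → A) :
    ((Fintype.card A : ENNReal) ^ Fintype.card Ω)⁻¹ ≤ volume (AgSet g ∩ Cube (A × Ω)) := by
  set Ties : Set (A × Ω → ℝ) := {u | ∃ ω, ∃ a, ∃ b, a ≠ b ∧ u (a, ω) = u (b, ω)} with hT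
  have hcover : Cube (A × Ω) ⊆ Ties ∪ ⋃ g' : Ω → A, (AgSet g' ∩ Cube (A × Ω)) := by
    intro u hu
    by_cases hN : u ∈ Ties
    · exact Or.inl hN
    · refine Or.inr ?_
      have hch : ∀ ω, ∃ a : A, ∀ b, b ≠ a → u (b, ω) < u (a, ω) := by
        intro ω
        obtain ⟨a, -, ha⟩ := Finset.exists_max_image Finset.univ (fun b => u (b, ω))
          Finset.univ_nonempty
        refine ⟨a, fun b hb => lt_of_le_of_ne (ha b (Finset.mem_univ b)) ?_⟩
        intro heq
        exact hN ⟨ω, b, a, hb, heq⟩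
      choose g' hg' using hch
      exact Set.mem_iUnion.2 ⟨g', fun ω b => hg' ω b, hu⟩
  have hone : (1 : ENNReal) ≤ ∑' g' : Ω → A, volume (AgSet g' ∩ Cube (A × Ω)) := by
    calc (1 : ENNReal) = volume (Cube (A × Ω)) := (vol_Cube _).symm
      _ ≤ volume (Ties ∪ ⋃ g' : Ω → A, (AgSet g' ∩ Cube (A × Ω))) := measure_mono hcover
      _ ≤ volume Ties + volume (⋃ g' : Ω → A, (AgSet g' ∩ Cube (A × Ω))) := measure_union_le _ _
      _ = volume (⋃ g' : Ω → A, (AgSet g' ∩ Cube (A × Ω))) := by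
          rw [vol_ties_zero, zero_add]
      _ ≤ ∑' g' : Ω → A, volume (AgSet g' ∩ Cube (A × Ω)) := measure_iUnion_le _
  have heq : ∀ g' : Ω → A, volume (AgSet g' ∩ Cube (A × Ω)) = volume (AgSet g ∩ Cube (A × Ω)) :=
    fun g' => vol_AgSet_eq g g'
  rw [tsum_fintype] at hone
  simp only [heq] at hone
  rw [Finset.sum_const, Finset.card_univ, Fintype.card_fun, nsmul_eq_mul, Nat.cast_pow] at hone
  set n : ENNReal := (Fintype.card A : ENNReal) ^ Fintype.card Ω with hn
  have hn0 : n ≠ 0 := by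
    rw [hn]
    exact pow_ne_zero _ (Nat.cast_ne_zero.2 Fintype.card_ne_zero)
  have hntop : n ≠ ⊤ := by
    rw [hn]
    exact ENNReal.pow_ne_top (ENNReal.natCast_ne_top _)
  calc n⁻¹ = n⁻¹ * 1 := (mul_one _).symm
    _ ≤ n⁻¹ * (n * volume (AgSet g ∩ Cube (A × Ω))) := by
        exact mul_le_mul_right hone _
    _ = volume (AgSet g ∩ Cube (A × Ω)) := by
        rw [← mul_assoc, ENNReal.inv_mul_cancel hn0 hntop, one_mul]

lemma vol_EcSet_eq [DecidableEq A] (μ₀ : Ω → ℝ) (g : Ω → A) (c : A → A) :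
    volume (EcSet μ₀ g c ∩ Cube (A × Ω)) = volume (EcSet μ₀ g id ∩ Cube (A × Ω)) := by
  set h : A → Equiv.Perm A := fun a => Equiv.swap a (c a) with hh
  set e : (A × Ω) ≃ (A × Ω) :=
    { toFun := fun p => (h (g p.2) p.1, p.2)
      invFun := fun p => ((h (g p.2)).symm p.1, p.2)
      left_inv := fun p => by simp
      right_inv := fun p => by simp } with he
  have hcell : ∀ (f : A × Ω → ℝ) (a b : A), cellSum μ₀ g a b (f ∘ e) = cellSum μ₀ g a (h a b) f := by
    intro f a b
    unfold cellSum
    refine Finset.sum_congr rfl fun ω _ => ?_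
    by_cases hω : g ω = a
    · simp [he, hω]
    · simp [hω]
  have hpre : (fun f : A × Ω → ℝ => f ∘ e) ⁻¹' (EcSet μ₀ g id ∩ Cube (A × Ω))
      = EcSet μ₀ g c ∩ Cube (A × Ω) := by
    have hC := preimage_Cube e
    have hE : (fun f : A × Ω → ℝ => f ∘ e) ⁻¹' EcSet μ₀ g id = EcSet μ₀ g c := by
      ext f
      simp only [Set.mem_preimage, EcSet, Set.mem_setOf_eq, id_eq]
      have hca : ∀ a, h a a = c a := fun a => by rw [hh]; exact Equiv.swap_apply_left _ _
      constructor
      · intro hf a b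
        have := hf a ((h a).symm b)
        rw [hcell, hcell, hca] at this
        simpa using this
      · intro hf a b
        rw [hcell, hcell, hca]
        exact hf a (h a b)
    rw [Set.preimage_inter, hE, hC]
  rw [← hpre]
  exact (mp_comp e).measure_preimage
    ((measurableSet_EcSet μ₀ g id).inter (measurableSet_Cube _)).nullMeasurableSet

lemma vol_EcSet_lb [DecidableEq A] [Nonempty A] (μ₀ : Ω → ℝ) (g : Ω → A) :
    ((Fintype.card A : ENNReal) ^ Fintype.card A)⁻¹ ≤ volume (EcSet μ₀ g id ∩ Cube (A × Ω)) := by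
  have hcover : Cube (A × Ω) ⊆ ⋃ c : A → A, (EcSet μ₀ g c ∩ Cube (A × Ω)) := by
    intro u hu
    have hch : ∀ a : A, ∃ b : A, ∀ b', cellSum μ₀ g a b' u ≤ cellSum μ₀ g a b u := by
      intro a
      obtain ⟨b, -, hb⟩ := Finset.exists_max_image Finset.univ (fun b => cellSum μ₀ g a b u)
        Finset.univ_nonempty
      exact ⟨b, fun b' => hb b' (Finset.mem_univ b')⟩
    choose c hc using hch
    exact Set.mem_iUnion.2 ⟨c, fun a b => hc a b, hu⟩
  have hone : (1 : ENNReal) ≤ ∑' c : A → A, volume (EcSet μ₀ g c ∩ Cube (A × Ω)) := by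
    calc (1 : ENNReal) = volume (Cube (A × Ω)) := (vol_Cube _).symm
      _ ≤ volume (⋃ c : A → A, (EcSet μ₀ g c ∩ Cube (A × Ω))) := measure_mono hcover
      _ ≤ ∑' c : A → A, volume (EcSet μ₀ g c ∩ Cube (A × Ω)) := measure_iUnion_le _
  rw [tsum_fintype] at hone
  simp only [fun c : A → A => vol_EcSet_eq μ₀ g c] at hone
  rw [Finset.sum_const, Finset.card_univ, Fintype.card_fun, nsmul_eq_mul, Nat.cast_pow] at hone
  set n : ENNReal := (Fintype.card A : ENNReal) ^ Fintype.card A with hn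
  have hn0 : n ≠ 0 := by
    rw [hn]
    exact pow_ne_zero _ (Nat.cast_ne_zero.2 Fintype.card_ne_zero)
  have hntop : n ≠ ⊤ := by
    rw [hn]
    exact ENNReal.pow_ne_top (ENNReal.natCast_ne_top _)
  calc n⁻¹ = n⁻¹ * 1 := (mul_one _).symm
    _ ≤ n⁻¹ * (n * volume (EcSet μ₀ g id ∩ Cube (A × Ω))) := mul_le_mul_right hone _
    _ = volume (EcSet μ₀ g id ∩ Cube (A × Ω)) := by
        rw [← mul_assoc, ENNReal.inv_mul_cancel hn0 hntop, one_mul]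
/-- Theorem 3(i) (Kamenica–Lin): the share of environments where commitment has
no value is at least `1/|A|^|A|`. -/
theorem share_no_value_of_commitment_lower_bound
    (Ω A M : Type) [Fintype Ω] [Fintype A] [Fintype M]
    [Nonempty Ω] [Nonempty A]
    (hM : max (Fintype.card Ω) (Fintype.card A) < Fintype.card M)
    (μ₀ : Ω → ℝ) (hμ : IsPrior μ₀) :
    1 / (Fintype.card A : ℝ) ^ Fintype.card A ≤
      (volume (EnvCube Ω A ∩
        {e | ¬ (ctPayoff (M := M) μ₀ e.1 e.2 < persPayoff (M := M) μ₀ e.1 e.2)})).toReal := by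
  classical
  set T : Set ((A × Ω → ℝ) × (A × Ω → ℝ)) :=
    EnvCube Ω A ∩ {e | ¬ (ctPayoff (M := M) μ₀ e.1 e.2 < persPayoff (M := M) μ₀ e.1 e.2)}
    with hT
  set S : (Ω → A) → Set ((A × Ω → ℝ) × (A × Ω → ℝ)) :=
    fun g => (AgSet g ∩ Cube (A × Ω)) ×ˢ (EcSet μ₀ g id ∩ Cube (A × Ω)) with hS
  have hsub : (⋃ g : Ω → A, S g) ⊆ T := by
    rintro ⟨uS, uR⟩ hmem
    obtain ⟨g, hg⟩ := Set.mem_iUnion.1 hmem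
    obtain ⟨⟨hAg, hSC⟩, hBg, hRC⟩ := hg
    refine ⟨⟨fun p => hSC p, fun p => hRC p⟩, ?_⟩
    have hmax : ∀ a ω, uS (a, ω) ≤ uS (g ω, ω) := by
      intro a ω
      by_cases h : a = g ω
      · rw [h]
      · exact (hAg ω a h).le
    exact not_lt.2 (pers_le_ct μ₀ hμ uS uR hSC g hmax hBg
      (le_of_lt (lt_of_le_of_lt (le_max_right _ _) hM)))
  have hdisj : Pairwise (Function.onFun Disjoint S) := by
    intro g g' hgg'
    obtain ⟨ω, hω⟩ : ∃ ω, g ω ≠ g' ω := by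
      by_contra hc
      push_neg at hc
      exact hgg' (funext hc)
    rw [Function.onFun, Set.disjoint_left]
    rintro ⟨uS, uR⟩ ⟨⟨h1, -⟩, -⟩ ⟨⟨h2, -⟩, -⟩
    exact lt_asymm (h1 ω (g' ω) (Ne.symm hω)) (h2 ω (g ω) hω)
  have hmeas : ∀ g : Ω → A, MeasurableSet (S g) := fun g =>
    ((measurableSet_AgSet g).inter (measurableSet_Cube _)).prod
      ((measurableSet_EcSet μ₀ g id).inter (measurableSet_Cube _))
  set n : ENNReal := (Fintype.card A : ENNReal) with hn
  have hn0 : n ≠ 0 := Nat.cast_ne_zero.2 Fintype.card_ne_zero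
  have hntop : n ≠ ⊤ := ENNReal.natCast_ne_top _
  have hlow : (n ^ Fintype.card A)⁻¹ ≤ volume T := by
    calc (n ^ Fintype.card A)⁻¹
        = (n ^ Fintype.card Ω) * ((n ^ Fintype.card Ω)⁻¹ * (n ^ Fintype.card A)⁻¹) := by
          rw [← mul_assoc, ENNReal.mul_inv_cancel (pow_ne_zero _ hn0)
            (ENNReal.pow_ne_top hntop), one_mul]
      _ ≤ ∑' g : Ω → A, volume (S g) := by
          rw [tsum_fintype]
          have hterm : ∀ g : Ω → A,
              (n ^ Fintype.card Ω)⁻¹ * (n ^ Fintype.card A)⁻¹ ≤ volume (S g) := by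
            intro g
            rw [hS]
            rw [Measure.volume_eq_prod, Measure.prod_prod]
            exact mul_le_mul' (vol_AgSet_lb g) (vol_EcSet_lb μ₀ g)
          calc (n ^ Fintype.card Ω) * ((n ^ Fintype.card Ω)⁻¹ * (n ^ Fintype.card A)⁻¹)
              = ∑ _g : Ω → A, ((n ^ Fintype.card Ω)⁻¹ * (n ^ Fintype.card A)⁻¹) := by
                rw [Finset.sum_const, Finset.card_univ, Fintype.card_fun, nsmul_eq_mul,
                  Nat.cast_pow]
            _ ≤ ∑ g : Ω → A, volume (S g) := Finset.sum_le_sum fun g _ => hterm g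
      _ = volume (⋃ g : Ω → A, S g) := (measure_iUnion hdisj hmeas).symm
      _ ≤ volume T := measure_mono hsub
  have hTfin : volume T ≠ ⊤ := by
    have h2 : EnvCube Ω A = (Cube (A × Ω)) ×ˢ (Cube (A × Ω)) := by
      ext e
      simp [EnvCube, Cube, Set.mem_prod]
    have h1 : volume T ≤ 1 := by
      calc volume T ≤ volume (EnvCube Ω A) := measure_mono Set.inter_subset_left
        _ = 1 := by
            rw [h2, Measure.volume_eq_prod, Measure.prod_prod, vol_Cube, one_mul]
    exact ne_top_of_le_ne_top ENNReal.one_ne_top h1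
  have hLne : (n ^ Fintype.card A)⁻¹ ≠ ⊤ := ENNReal.inv_ne_top.2 (pow_ne_zero _ hn0)
  have hmain := (ENNReal.toReal_le_toReal hLne hTfin).2 hlow
  have hLval : ((n ^ Fintype.card A)⁻¹).toReal = 1 / (Fintype.card A : ℝ) ^ Fintype.card A := by
    rw [hn]
    simp [ENNReal.toReal_inv, one_div]
  rwa [hLval] at hmain

end KL
end

section
/- Fix nonempty finite sets Ω and A. The set of environments (u_S, u_R) satisfying scant-indifferences is generic: the set of environments for which some row-submatrix of some expanded-indifference matrix T^i fails to have full rank has Lebesgue measure zero in [0,1]^{2|A||Ω|}. -/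
/-!
A row-submatrix of `T^i` with `k ≤ |Ω|` rows has full rank as soon as one of its `k × k` minors
is nonzero, and each minor is a polynomial in the `2|A||Ω|` utilities. For a suitable choice of
columns this polynomial is nonzero: there is an environment in which the chosen rows of `T^i`
are distinct unit vectors (the indifference rows are arbitrary, the identity rows are sent to
their own columns and the others to unused columns). The zero set of a nonzero real polynomial
is Lebesgue-null, by induction on the number of variables and Fubini, and there are finitely
many pairs `(i, s)`; a set of more than `|Ω|` rows is handled through a subset of `|Ω|` rows.
-/

open MeasureTheory

namespace MvPolynomial

theorem volume_zeroSet_fin_eq_zero :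
    ∀ {n : ℕ} {p : MvPolynomial (Fin n) ℝ}, p ≠ 0 → volume {x | eval x p = 0} = 0
  | 0, p, hp => by
    obtain ⟨c, rfl⟩ := C_surjective (Fin 0) p
    simp_all
  | n + 1, p, hp => by
    set q := finSuccEquiv ℝ n p
    have hq : q ≠ 0 := (EmbeddingLike.map_ne_zero_iff).2 hp
    have hlead : ∀ᵐ s : Fin n → ℝ, eval s q.leadingCoeff ≠ 0 :=
      measure_eq_zero_iff_ae_notMem.1
        (volume_zeroSet_fin_eq_zero (Polynomial.leadingCoeff_ne_zero.2 hq))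
    -- Away from the zero set of the leading coefficient, `p` is a nonzero polynomial in the
    -- first variable, so it has finitely many roots there.
    have hsection : ∀ᵐ s : Fin n → ℝ, volume {y : ℝ | eval (Fin.cons y s) p = 0} = 0 := by
      filter_upwards [hlead] with s hs
      have hqs : q.map (eval s) ≠ 0 := fun h => hs <| by
        simpa using congrArg (Polynomial.coeff · q.natDegree) h
      simp_rw [eval_eq_eval_mv_eval']
      exact (Polynomial.finite_setOfPred_isRoot hqs).measure_zero _
    have hZ : volume {z : ℝ × (Fin n → ℝ) | eval (Fin.cons z.1 z.2) p = 0} = 0 := by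
      have hmeas : MeasurableSet {z : ℝ × (Fin n → ℝ) | eval (Fin.cons z.1 z.2) p = 0} :=
        measurableSet_eq_fun
          ((continuous_eval p).comp (continuous_fst.finCons continuous_snd)).measurable
          measurable_const
      rw [Measure.volume_eq_prod, Measure.prod_apply_symm hmeas]
      exact (lintegral_congr_ae hsection).trans lintegral_zero
    convert (volume_preserving_piFinSuccAbove (fun _ => ℝ) 0).quasiMeasurePreserving.preimage_null
      hZ using 3 with x
    simp

theorem volume_zeroSet_eq_zero {σ : Type*} [Fintype σ] {p : MvPolynomial σ ℝ} (hp : p ≠ 0) :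
    volume {x : σ → ℝ | eval x p = 0} = 0 := by
  let e := Fintype.equivFin σ
  have hp' : rename e p ≠ 0 := by
    rwa [Ne, ← map_zero (rename e), (rename_injective e e.injective).eq_iff]
  convert (volume_measurePreserving_piCongrLeft (fun _ => ℝ) e).quasiMeasurePreserving
    |>.preimage_null (volume_zeroSet_fin_eq_zero hp') using 2
  ext x
  simp only [Set.mem_ofPred_eq, Set.mem_preimage, eval_rename]
  rw [show MeasurableEquiv.piCongrLeft (fun _ => ℝ) e x ∘ e = x from
    _root_.funext (Equiv.piCongrLeft_apply_apply (fun _ => ℝ) e x)]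

end MvPolynomial

namespace Matrix

theorem volume_setOf_rank_lt_eq_zero_of_det_ne_zero {σ m n k : Type*} [Fintype σ] [Fintype n]
    [Fintype k] [DecidableEq k] (M : Matrix m n (MvPolynomial σ ℝ)) (r : k → m) (c : k → n)
    {x₀ : σ → ℝ} (hx₀ : ((M.map (MvPolynomial.eval x₀)).submatrix r c).det ≠ 0) :
    volume {x | (M.map (MvPolynomial.eval x)).rank < Fintype.card k} = 0 := by
  have heval : ∀ x, MvPolynomial.eval x (M.submatrix r c).det
      = ((M.map (MvPolynomial.eval x)).submatrix r c).det := fun x => by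
    rw [RingHom.map_det, submatrix_map]
    rfl
  refine measure_mono_null (fun x hx => ?_) (MvPolynomial.volume_zeroSet_eq_zero
    (p := (M.submatrix r c).det) fun h => hx₀ (by rw [← heval, h, map_zero]))
  rw [Set.mem_ofPred_eq, heval]
  by_contra hdet
  have hminor := rank_of_isUnit _ ((isUnit_iff_isUnit_det _).2 (Ne.isUnit hdet))
  exact hx.not_ge (hminor ▸ rank_submatrix_le _ r c)

end Matrix

theorem Finset.exists_injOn_sumElim_id {L Ω : Type*} [Fintype Ω] [Nonempty Ω]
    (s : Finset (L ⊕ Ω)) (hs : s.card ≤ Fintype.card Ω) :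
    ∃ f : L → Ω, Set.InjOn (Sum.elim f id) s := by
  classical
  have hcard : (s.toLeft : Set L).encard ≤ ((s.toRight : Set Ω)ᶜ).encard := by
    rw [← Finset.coe_compl, Set.encard_coe_eq_coe_finsetCard, Set.encard_coe_eq_coe_finsetCard,
      Finset.card_compl]
    have := s.card_toLeft_add_card_toRight
    exact_mod_cast (by omega)
  obtain ⟨f, hmaps, hinj⟩ := s.toLeft.finite_toSet.exists_injOn_of_encard_le hcard
  refine ⟨f, ?_⟩
  rintro (a | ω) ha (b | ω') hb h
  · simpa using hinj (mem_toLeft.2 ha) (mem_toLeft.2 hb) h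
  · simp only [Sum.elim_inl, Sum.elim_inr, id] at h
    exact absurd (h ▸ hb) (by simpa using hmaps (mem_toLeft.2 ha))
  · simp only [Sum.elim_inl, Sum.elim_inr, id] at h
    exact absurd (h ▸ ha) (by simpa using hmaps (mem_toLeft.2 hb))
  · simpa using h

namespace KL

open Matrix MvPolynomial

open Classical in
/-- The indeterminate `inl (a, ω)` stands for `u_S(a, ω)` and `inr (a, ω)` for `u_R(a, ω)`. -/
noncomputable def TPoly (Ω A : Type) (i : A) :
    Matrix (({j : A // j ≠ i} ⊕ {j : A // j ≠ i}) ⊕ Ω) Ω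
      (MvPolynomial ((A × Ω) ⊕ (A × Ω)) ℝ) :=
  Matrix.of fun r ω =>
    match r with
    | Sum.inl (Sum.inl j) => X (Sum.inl (j.1, ω)) - X (Sum.inl (i, ω))
    | Sum.inl (Sum.inr j) => X (Sum.inr (j.1, ω)) - X (Sum.inr (i, ω))
    | Sum.inr ω' => if ω' = ω then 1 else 0

theorem TPoly_map {Ω A : Type} (uS uR : A × Ω → ℝ) (i : A) :
    (TPoly Ω A i).map (eval (Sum.elim uS uR)) = TMat uS uR i := by
  ext ((j | j) | ω') ω <;> simp [TPoly, TMat, apply_ite (eval (Sum.elim uS uR))]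

open Classical in
theorem exists_TMat_eq_fromRows {Ω A : Type} (i : A)
    (D : Matrix ({j : A // j ≠ i} ⊕ {j : A // j ≠ i}) Ω ℝ) :
    ∃ uS uR : A × Ω → ℝ, TMat uS uR i = fromRows D 1 := by
  refine ⟨fun p => if h : p.1 = i then 0 else D (.inl ⟨p.1, h⟩) p.2,
    fun p => if h : p.1 = i then 0 else D (.inr ⟨p.1, h⟩) p.2, ?_⟩
  ext ((j | j) | ω') ω
  · simp [TMat, j.2]
  · simp [TMat, j.2]
  · simp [TMat, one_apply]

open Classical in
theorem exists_det_TMat_submatrix_ne_zero {Ω A : Type} [Fintype Ω] [Nonempty Ω] (i : A)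
    (s : Finset (({j : A // j ≠ i} ⊕ {j : A // j ≠ i}) ⊕ Ω))
    (hs : s.card ≤ Fintype.card Ω) :
    ∃ (uS uR : A × Ω → ℝ) (c : s → Ω),
      ((TMat uS uR i).submatrix (fun r : s => r.1) c).det ≠ 0 := by
  obtain ⟨f, hf⟩ := s.exists_injOn_sumElim_id hs
  obtain ⟨uS, uR, hT⟩ :=
    exists_TMat_eq_fromRows i (of fun l ω => if f l = ω then (1 : ℝ) else 0)
  have hunit : ∀ r ω, TMat uS uR i r ω = if Sum.elim f id r = ω then 1 else 0 := by
    rintro (l | ω') ω <;> simp [hT, one_apply] <;> congr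
  refine ⟨uS, uR, fun r : s => Sum.elim f id r, ?_⟩
  have hminor : (TMat uS uR i).submatrix (fun r : s => r.1) (fun r : s => Sum.elim f id r) = 1 := by
    ext r r'
    simp only [submatrix_apply, hunit, one_apply, hf.eq_iff r.2 r'.2, Subtype.ext_iff]
  simp [hminor]

theorem volume_setOf_rank_TMat_submatrix_lt_eq_zero {Ω A : Type} [Fintype Ω] [Fintype A]
    [Nonempty Ω] (i : A) (s : Finset (({j : A // j ≠ i} ⊕ {j : A // j ≠ i}) ⊕ Ω)) :
    volume {e : (A × Ω → ℝ) × (A × Ω → ℝ) |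
      ((TMat e.1 e.2 i).submatrix (fun r : s => r.1) id).rank
        < min s.card (Fintype.card Ω)} = 0 := by
  classical
  obtain ⟨s', hs's, hcard⟩ :=
    Finset.exists_subset_card_eq (min_le_left s.card (Fintype.card Ω))
  obtain ⟨uS, uR, c, hc⟩ :=
    exists_det_TMat_submatrix_ne_zero i s' (hcard.trans_le (min_le_right _ _))
  have hnull := volume_setOf_rank_lt_eq_zero_of_det_ne_zero
    ((TPoly Ω A i).submatrix Subtype.val id) (fun r : s' => ⟨r, hs's r.2⟩) c
    (x₀ := Sum.elim uS uR) (by simpa [← submatrix_map, TPoly_map])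
  rw [Fintype.card_coe, hcard] at hnull
  convert (volume_measurePreserving_sumPiEquivProdPi_symm _).quasiMeasurePreserving.preimage_null
    hnull using 2
  ext e
  simp only [Set.mem_preimage, Set.mem_ofPred_eq, ← TPoly_map, submatrix_map]
  rfl

theorem scant_indifferences_generic_general
    (Ω A : Type) [Fintype Ω] [Fintype A] [Nonempty Ω] :
    volume (EnvCube Ω A ∩ {e | ¬ ScantIndiff e.1 e.2}) = 0 := by
  classical
  refine measure_mono_null (fun e he => ?_) (measure_iUnion_null fun i =>
    measure_iUnion_null fun s => volume_setOf_rank_TMat_submatrix_lt_eq_zero i s)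
  have hbad : ¬ ScantIndiff e.1 e.2 := he.2
  simp only [ScantIndiff, not_forall] at hbad
  obtain ⟨i, s, hs⟩ := hbad
  have hle : ((TMat e.1 e.2 i).submatrix (fun r : s => r.1) id).rank
      ≤ min s.card (Fintype.card Ω) :=
    le_min ((rank_le_card_height _).trans_eq (Fintype.card_coe s)) (rank_le_card_width _)
  exact Set.mem_iUnion₂.2 ⟨i, s, hle.lt_of_ne hs⟩

/-- Lemma 2 (Kamenica–Lin): the set of scant-indifferences environments is generic:
the set of environments where some row-submatrix of some expanded-indifference
matrix fails to have full rank has Lebesgue measure zero. -/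
theorem scant_indifferences_generic
    (Ω A : Type) [Fintype Ω] [Fintype A] [Nonempty Ω] [Nonempty A] :
    volume (EnvCube Ω A ∩ {e | ¬ ScantIndiff e.1 e.2}) = 0 :=
  scant_indifferences_generic_general Ω A

end KL
end

section
/- Fix nonempty finite sets Ω and A and an interior prior μ₀ on Ω. The share of environments (u_S, u_R) that are felicitous is at least 1/|A|^{|A|}. -/
open MeasureTheory

namespace KL

variable {Ω A M : Type} [Fintype Ω] [Fintype A] [Fintype M]

section Aux

open Classical

variable {Ω A : Type} [Fintype Ω] [Fintype A]

/-- `a` is the unique strict maximizer of `uS (·, ω)`. -/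
def SMax (uS : A × Ω → ℝ) (ω : Ω) (a : A) : Prop := ∀ b, b ≠ a → uS (b, ω) < uS (a, ω)

/-- The region of sender utilities whose strict-argmax pattern is `c`. -/
def Reg (c : Ω → A) : Set (A × Ω → ℝ) := {uS | ∀ ω, SMax uS ω (c ω)}

lemma smax_unique {uS : A × Ω → ℝ} {ω : Ω} {a b : A} (ha : SMax uS ω a) (hb : SMax uS ω b) :
    a = b := by
  by_contra h
  exact lt_irrefl _ ((ha b (Ne.symm h)).trans (hb a h))

lemma reg_disjoint {c c' : Ω → A} (h : c ≠ c') : Disjoint (Reg c) (Reg c') := by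
  rw [Set.disjoint_left]
  intro uS hc hc'
  exact h (funext fun ω => smax_unique (hc ω) (hc' ω))

lemma meas_Reg (c : Ω → A) : MeasurableSet (Reg c) := by
  have : Reg c = ⋂ ω, ⋂ b, ⋂ (_ : b ≠ c ω), {uS : A × Ω → ℝ | uS (b, ω) < uS (c ω, ω)} := by
    ext uS; simp [Reg, SMax]
  rw [this]
  exact MeasurableSet.iInter fun ω => MeasurableSet.iInter fun b => MeasurableSet.iInter fun _ =>
    measurableSet_lt (measurable_pi_apply _) (measurable_pi_apply _)

lemma idealStates_eq {c : Ω → A} {uS : A × Ω → ℝ} (h : uS ∈ Reg c) (a : A) :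
    idealStates uS a = Finset.univ.filter fun ω => c ω = a := by
  ext ω
  simp only [idealStates, Finset.mem_filter, Finset.mem_univ, true_and]
  constructor
  · intro hid
    by_contra hne
    exact lt_irrefl _ (lt_of_lt_of_le (h ω a fun hh => hne hh.symm) (hid (c ω)))
  · intro hc b
    rcases eq_or_ne b a with rfl | hb
    · exact le_rfl
    · have hlt := h ω b (by rw [hc]; exact hb)
      rw [hc] at hlt
      exact le_of_lt hlt

/-- The coordinate permutation of `A × Ω` swapping `c ω ↔ f (c ω)` in each fiber. -/
noncomputable def prm (f : A → A) (c : Ω → A) : (A × Ω) ≃ (A × Ω) :=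
  Function.Involutive.toPerm
    (fun p => (Equiv.swap (c p.2) (f (c p.2)) p.1, p.2))
    (fun p => by simp)

lemma prm_apply (f : A → A) (c : Ω → A) (p : A × Ω) :
    prm f c p = (Equiv.swap (c p.2) (f (c p.2)) p.1, p.2) := rfl

/-- Precomposition with a permutation of coordinates preserves the pi volume. -/
lemma mp_precomp (e : (A × Ω) ≃ (A × Ω)) :
    MeasurePreserving (fun g : A × Ω → ℝ => g ∘ e)
      (volume : Measure (A × Ω → ℝ)) volume := by
  have key : ∀ g : (A × Ω) → ℝ, ∀ p : A × Ω,
      (MeasurableEquiv.piCongrLeft (fun _ : A × Ω => ℝ) e.symm) g p = g (e p) := by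
    intro g p
    have := MeasurableEquiv.piCongrLeft_apply_apply (β := fun _ : A × Ω => ℝ) e.symm g (e p)
    simpa using this
  have heq : (fun g : A × Ω → ℝ => g ∘ e)
      = ⇑(MeasurableEquiv.piCongrLeft (fun _ : A × Ω => ℝ) e.symm) := by
    funext g; funext p; exact (key g p).symm
  rw [heq]
  exact volume_measurePreserving_piCongrLeft (fun _ : A × Ω => ℝ) e.symm

/-- The skew transformation acting on the receiver utility by the permutation `prm f c`. -/
noncomputable def Phi (f : A → A) (c : Ω → A) :
    ((A × Ω → ℝ) × (A × Ω → ℝ)) → ((A × Ω → ℝ) × (A × Ω → ℝ)) :=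
  Prod.map id (fun g => g ∘ prm f c)

lemma mp_Phi (f : A → A) (c : Ω → A) :
    MeasurePreserving (Phi f c)
      (volume : Measure ((A × Ω → ℝ) × (A × Ω → ℝ))) volume := by
  rw [show (volume : Measure ((A × Ω → ℝ) × (A × Ω → ℝ)))
      = (volume : Measure (A × Ω → ℝ)).prod volume from Measure.volume_eq_prod _ _]
  exact (MeasurePreserving.id volume).prod (mp_precomp (prm f c))

/-- A single hyperplane `{u p = u q}` is null. -/
lemma null_eqset (p q : A × Ω) (hpq : p ≠ q) :
    (volume : Measure (A × Ω → ℝ)) {u | u p = u q} = 0 := by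
  have hset : {u : A × Ω → ℝ | u p = u q}
      = (LinearMap.ker ((LinearMap.proj p : (A × Ω → ℝ) →ₗ[ℝ] ℝ) - LinearMap.proj q)
          : Submodule ℝ (A × Ω → ℝ)) := by
    ext u
    simp [LinearMap.mem_ker, sub_eq_zero]
  rw [hset]
  refine Measure.addHaar_submodule _ _ ?_
  intro htop
  have hmem : (Pi.single p 1 : A × Ω → ℝ) ∈
      LinearMap.ker ((LinearMap.proj p : (A × Ω → ℝ) →ₗ[ℝ] ℝ) - LinearMap.proj q) := by
    rw [htop]; trivial
  have : (Pi.single p 1 : A × Ω → ℝ) p - (Pi.single p 1 : A × Ω → ℝ) q = 0 := hmem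
  rw [Pi.single_eq_same, Pi.single_eq_of_ne (Ne.symm hpq)] at this
  norm_num at this

/-- The set of sender utilities with a tie somewhere is null. -/
lemma null_ties [Nonempty A] :
    (volume : Measure (A × Ω → ℝ)) {uS | ¬ ∃ c : Ω → A, uS ∈ Reg c} = 0 := by
  have hsub : {uS : A × Ω → ℝ | ¬ ∃ c : Ω → A, uS ∈ Reg c}
      ⊆ ⋃ (p : A × Ω) (q : A × Ω) (_ : p ≠ q), {u : A × Ω → ℝ | u p = u q} := by
    intro uS h
    simp only [Set.mem_setOf_eq] at h
    have : ∃ ω, ∀ a, ¬ SMax uS ω a := by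
      by_contra hh
      push_neg at hh
      exact h ⟨fun ω => (hh ω).choose, fun ω => (hh ω).choose_spec⟩
    obtain ⟨ω, hω⟩ := this
    obtain ⟨a, -, ha⟩ := Finset.exists_max_image Finset.univ (fun a => uS (a, ω))
      Finset.univ_nonempty
    have := hω a
    simp only [SMax, not_forall] at this
    obtain ⟨b, hb, hble⟩ := this
    push_neg at hble
    have heq : uS (b, ω) = uS (a, ω) := le_antisymm (ha b (Finset.mem_univ b)) hble
    refine Set.mem_iUnion.2 ⟨(b, ω), Set.mem_iUnion.2 ⟨(a, ω), Set.mem_iUnion.2 ⟨?_, heq⟩⟩⟩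
    simp [hb]
  refine measure_mono_null hsub ?_
  exact measure_iUnion_null fun p => measure_iUnion_null fun q => measure_iUnion_null fun h =>
    null_eqset p q h

/-- Felicity relative to a fixed pattern `c` (a condition on `uR` only). -/
def FelC (μ₀ : Ω → ℝ) (c : Ω → A) : Set ((A × Ω → ℝ) × (A × Ω → ℝ)) :=
  {e | ∀ a a' : A, 0 ≤ ∑ ω ∈ Finset.univ.filter fun ω => c ω = a,
      μ₀ ω * (e.2 (a, ω) - e.2 (a', ω))}

lemma meas_FelC (μ₀ : Ω → ℝ) (c : Ω → A) : MeasurableSet (FelC (A := A) μ₀ c) := by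
  have : FelC (A := A) μ₀ c = ⋂ a, ⋂ a', {e : (A × Ω → ℝ) × (A × Ω → ℝ) |
      0 ≤ ∑ ω ∈ Finset.univ.filter fun ω => c ω = a, μ₀ ω * (e.2 (a, ω) - e.2 (a', ω))} := by
    ext e; simp [FelC]
  rw [this]
  refine MeasurableSet.iInter fun a => MeasurableSet.iInter fun a' => ?_
  refine measurableSet_le measurable_const ?_
  refine Finset.measurable_sum _ fun ω _ => ?_
  exact measurable_const.mul
    (((measurable_pi_apply (a, ω)).comp measurable_snd).sub
      ((measurable_pi_apply (a', ω)).comp measurable_snd))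

lemma meas_cubeBox : MeasurableSet (EnvCube Ω A) := by
  have : EnvCube Ω A = (Set.univ.pi fun _ : A × Ω => Set.Icc (0:ℝ) 1)
      ×ˢ (Set.univ.pi fun _ : A × Ω => Set.Icc (0:ℝ) 1) := by
    ext e; simp only [EnvCube, Set.mem_setOf_eq, Set.mem_prod, Set.mem_univ_pi]
  rw [this]
  exact (MeasurableSet.univ_pi fun _ => measurableSet_Icc).prod
    (MeasurableSet.univ_pi fun _ => measurableSet_Icc)

lemma vol_cube : (volume : Measure ((A × Ω → ℝ) × (A × Ω → ℝ))) (EnvCube Ω A) = 1 := by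
  have hE : EnvCube Ω A = (Set.univ.pi fun _ : A × Ω => Set.Icc (0:ℝ) 1)
      ×ˢ (Set.univ.pi fun _ : A × Ω => Set.Icc (0:ℝ) 1) := by
    ext e; simp only [EnvCube, Set.mem_setOf_eq, Set.mem_prod, Set.mem_univ_pi]
  have hB : (volume : Measure (A × Ω → ℝ)) (Set.univ.pi fun _ : A × Ω => Set.Icc (0:ℝ) 1) = 1 := by
    rw [volume_pi_pi]
    simp [Real.volume_Icc]
  rw [hE, show (volume : Measure ((A × Ω → ℝ) × (A × Ω → ℝ)))
      = (volume : Measure (A × Ω → ℝ)).prod volume from Measure.volume_eq_prod _ _,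
    Measure.prod_prod, hB, one_mul]

/-- The key covering step: given a pattern `c` and any receiver utility, some relabeling
`f` makes the relabeled receiver utility `c`-felicitous. -/
lemma covering [Nonempty A] (μ₀ : Ω → ℝ) (c : Ω → A) (uR : A × Ω → ℝ) :
    ∃ f : A → A, ∀ a a' : A, 0 ≤ ∑ ω ∈ Finset.univ.filter fun ω => c ω = a,
      μ₀ ω * ((uR ∘ prm f c) (a, ω) - (uR ∘ prm f c) (a', ω)) := by
  have hex : ∀ a : A, ∃ b : A, ∀ b' : A,
      (∑ ω ∈ Finset.univ.filter fun ω => c ω = a, μ₀ ω * uR (b', ω))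
        ≤ ∑ ω ∈ Finset.univ.filter fun ω => c ω = a, μ₀ ω * uR (b, ω) := by
    intro a
    obtain ⟨b, -, hb⟩ := Finset.exists_max_image Finset.univ
      (fun b => ∑ ω ∈ Finset.univ.filter fun ω => c ω = a, μ₀ ω * uR (b, ω))
      Finset.univ_nonempty
    exact ⟨b, fun b' => hb b' (Finset.mem_univ b')⟩
  choose f hf using hex
  refine ⟨f, fun a a' => ?_⟩
  have hsum : ∀ b : A, (∑ ω ∈ Finset.univ.filter fun ω => c ω = a,
      μ₀ ω * (uR ∘ prm f c) (b, ω))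
      = ∑ ω ∈ Finset.univ.filter fun ω => c ω = a,
        μ₀ ω * uR (Equiv.swap a (f a) b, ω) := by
    intro b
    refine Finset.sum_congr rfl fun ω hω => ?_
    have hc : c ω = a := by simpa using hω
    simp [prm_apply, hc]
  have hsplit : (∑ ω ∈ Finset.univ.filter fun ω => c ω = a,
      μ₀ ω * ((uR ∘ prm f c) (a, ω) - (uR ∘ prm f c) (a', ω)))
      = (∑ ω ∈ Finset.univ.filter fun ω => c ω = a, μ₀ ω * (uR ∘ prm f c) (a, ω))
        - ∑ ω ∈ Finset.univ.filter fun ω => c ω = a, μ₀ ω * (uR ∘ prm f c) (a', ω) := by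
    rw [← Finset.sum_sub_distrib]
    exact Finset.sum_congr rfl fun ω _ => by ring
  rw [hsplit, hsum a, hsum a', sub_nonneg]
  have : Equiv.swap a (f a) a = f a := Equiv.swap_apply_left a (f a)
  rw [this]
  exact hf a (Equiv.swap a (f a) a')

end Aux

open scoped ENNReal

/-- Lemma (Kamenica–Lin): the share of felicitous environments is at least
`1/|A|^|A|`. -/
theorem share_felicitous_lower_bound
    (Ω A : Type) [Fintype Ω] [Fintype A] [Nonempty Ω] [Nonempty A]
    (μ₀ : Ω → ℝ) (hμ : IsPrior μ₀) :
    1 / (Fintype.card A : ℝ) ^ Fintype.card A ≤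
      (volume (EnvCube Ω A ∩ {e | Felicitous μ₀ e.1 e.2})).toReal := by
  classical
  set F : Set ((A × Ω → ℝ) × (A × Ω → ℝ)) := EnvCube Ω A ∩ {e | Felicitous μ₀ e.1 e.2} with hF
  set G : (Ω → A) → Set ((A × Ω → ℝ) × (A × Ω → ℝ)) :=
    fun c => (EnvCube Ω A ∩ FelC μ₀ c) ∩ (Reg c ×ˢ Set.univ) with hG
  have measG : ∀ c, MeasurableSet (G c) :=
    fun c => ((meas_cubeBox).inter (meas_FelC μ₀ c)).inter
      ((meas_Reg c).prod MeasurableSet.univ)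
  have hGF : ∀ c, G c ⊆ F := by
    rintro c e ⟨⟨hcube, hfel⟩, hreg, -⟩
    refine ⟨hcube, fun a a' => ?_⟩
    rw [idealStates_eq hreg a]
    exact hfel a a'
  have hGdis : Pairwise (Function.onFun Disjoint G) := by
    intro c c' hcc
    refine Set.disjoint_left.2 fun e he he' => ?_
    exact Set.disjoint_left.1 (reg_disjoint hcc) he.2.1 he'.2.1
  have hcover : ∀ c : Ω → A,
      EnvCube Ω A ∩ (Reg c ×ˢ Set.univ) ⊆ ⋃ f : A → A, Phi f c ⁻¹' G c := by
    rintro c e ⟨hcube, hreg, -⟩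
    obtain ⟨f, hf⟩ := covering μ₀ c e.2
    refine Set.mem_iUnion.2 ⟨f, ?_⟩
    show Phi f c e ∈ G c
    exact ⟨⟨⟨hcube.1, fun p => hcube.2 (prm f c p)⟩, hf⟩, hreg, Set.mem_univ _⟩
  have hbound : ∀ c : Ω → A, volume (EnvCube Ω A ∩ (Reg c ×ˢ Set.univ))
      ≤ (Fintype.card (A → A) : ℝ≥0∞) * volume (G c) := by
    intro c
    calc volume (EnvCube Ω A ∩ (Reg c ×ˢ Set.univ))
        ≤ volume (⋃ f : A → A, Phi f c ⁻¹' G c) := measure_mono (hcover c)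
      _ ≤ ∑ f : A → A, volume (Phi f c ⁻¹' G c) := measure_iUnion_fintype_le volume _
      _ = ∑ _f : A → A, volume (G c) := Finset.sum_congr rfl fun f _ =>
          (mp_Phi f c).measure_preimage (measG c).nullMeasurableSet
      _ = (Fintype.card (A → A) : ℝ≥0∞) * volume (G c) := by
          rw [Finset.sum_const, Finset.card_univ, nsmul_eq_mul]
  have hnull : volume (({uS | ¬ ∃ c : Ω → A, uS ∈ Reg c} : Set (A × Ω → ℝ))
      ×ˢ (Set.univ : Set (A × Ω → ℝ))) = 0 := by
    rw [show (volume : Measure ((A × Ω → ℝ) × (A × Ω → ℝ)))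
        = (volume : Measure (A × Ω → ℝ)).prod volume from Measure.volume_eq_prod _ _,
      Measure.prod_prod, null_ties, zero_mul]
  have hsubset : EnvCube Ω A ⊆ (⋃ c : Ω → A, EnvCube Ω A ∩ (Reg c ×ˢ Set.univ))
      ∪ (({uS | ¬ ∃ c : Ω → A, uS ∈ Reg c} : Set (A × Ω → ℝ))
          ×ˢ (Set.univ : Set (A × Ω → ℝ))) := by
    intro e he
    by_cases h : ∃ c : Ω → A, e.1 ∈ Reg c
    · obtain ⟨c, hc⟩ := h
      exact Or.inl (Set.mem_iUnion.2 ⟨c, he, hc, Set.mem_univ _⟩)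
    · exact Or.inr ⟨h, Set.mem_univ _⟩
  have key : (1 : ℝ≥0∞) ≤ (Fintype.card (A → A) : ℝ≥0∞) * volume F := by
    calc (1 : ℝ≥0∞) = volume (EnvCube Ω A) := vol_cube.symm
      _ ≤ volume (⋃ c : Ω → A, EnvCube Ω A ∩ (Reg c ×ˢ Set.univ))
          + volume (({uS | ¬ ∃ c : Ω → A, uS ∈ Reg c} : Set (A × Ω → ℝ))
            ×ˢ (Set.univ : Set (A × Ω → ℝ))) :=
          le_trans (measure_mono hsubset) (measure_union_le _ _)
      _ = volume (⋃ c : Ω → A, EnvCube Ω A ∩ (Reg c ×ˢ Set.univ)) := by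
          rw [hnull, add_zero]
      _ ≤ ∑ c : Ω → A, volume (EnvCube Ω A ∩ (Reg c ×ˢ Set.univ)) :=
          measure_iUnion_fintype_le volume _
      _ ≤ ∑ c : Ω → A, (Fintype.card (A → A) : ℝ≥0∞) * volume (G c) :=
          Finset.sum_le_sum fun c _ => hbound c
      _ = (Fintype.card (A → A) : ℝ≥0∞) * ∑ c : Ω → A, volume (G c) := by
          rw [Finset.mul_sum]
      _ = (Fintype.card (A → A) : ℝ≥0∞) * volume (⋃ c : Ω → A, G c) := by
          rw [measure_iUnion hGdis measG, tsum_fintype]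
      _ ≤ (Fintype.card (A → A) : ℝ≥0∞) * volume F := by
          exact mul_le_mul_right (measure_mono (Set.iUnion_subset hGF)) _
  have hFle : volume F ≤ 1 := by
    rw [← vol_cube (Ω := Ω) (A := A)]
    exact measure_mono Set.inter_subset_left
  have hFne : volume F ≠ ⊤ := (lt_of_le_of_lt hFle ENNReal.one_lt_top).ne
  have hNtop : ((Fintype.card (A → A) : ℝ≥0∞) * volume F) ≠ ⊤ :=
    ENNReal.mul_ne_top (ENNReal.natCast_ne_top _) hFne
  have h2 : (1 : ℝ) ≤ ((Fintype.card (A → A) : ℝ≥0∞) * volume F).toReal := by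
    rw [← ENNReal.toReal_one]
    exact ENNReal.toReal_mono hNtop key
  rw [ENNReal.toReal_mul, ENNReal.toReal_natCast, Fintype.card_fun] at h2
  have hpos : (0 : ℝ) < (Fintype.card A : ℝ) ^ Fintype.card A := by
    have : 0 < Fintype.card A := Fintype.card_pos
    positivity
  rw [div_le_iff₀ hpos]
  have hcast : ((Fintype.card A ^ Fintype.card A : ℕ) : ℝ)
      = (Fintype.card A : ℝ) ^ Fintype.card A := by push_cast; ring
  rw [hcast] at h2
  nlinarith [ENNReal.toReal_nonneg (a := volume F)]

end KL
end
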